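/- arXiv:1305.5278 — 9 statements merged into one kernel-verified Lean document; each statement's English description precedes it below -/
import Mathlib

section
/- Let p be a probability distribution on Fin k and let d : Fin k → ℕ satisfy d i ≥ 1 for all i; set N := ∑ i, d i. Let γ be the probability distribution on Fin k with γ i := d i / N, and let Γ(p) be the probability distribution on Fin N obtained by replacing, for each i, the entry p i by d i equal entries p i / d i. Then for every α ∈ ℝ (and also for α = +∞ and α = −∞), D_α(p ‖ γ) = D_α(Γ(p) ‖ η_N), where η_N is the uniform distribution on Fin N. -/
open scoped BigOperators ENNReal Classical

noncomputable section

/-- A probability distribution on a finite type. -/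
def IsProb {ι : Type*} [Fintype ι] (p : ι → ℝ) : Prop :=
  (∀ i, 0 ≤ p i) ∧ ∑ i, p i = 1

/-- Extended-real logarithm of an extended nonnegative real. -/
def elog (x : ℝ≥0∞) : EReal :=
  if x = 0 then ⊥ else if x = ⊤ then ⊤ else ((Real.log x.toReal : ℝ) : EReal)

/-- The Rényi divergence `D_α(p‖q)`, valued in the extended reals, with the
conventions `0/0 = 0` and `a/0 = ∞` for `a > 0` built into the `ℝ≥0∞`-valued
terms `p i ^ α * q i ^ (1-α)`. -/
def renyiD {ι : Type*} [Fintype ι] (α : ℝ) (p q : ι → ℝ) : EReal :=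
  if α = 0 then - elog (ENNReal.ofReal (∑ i ∈ Finset.univ.filter (fun i => p i ≠ 0), q i))
  else if α = 1 then (((∑ i, p i * (Real.log (p i) - Real.log (q i))) : ℝ) : EReal)
  else ((Real.sign α / (α - 1) : ℝ) : EReal) *
    elog (∑ i, (ENNReal.ofReal (p i)) ^ α * (ENNReal.ofReal (q i)) ^ (1 - α))

/-- `D_∞(p‖q) = log max_i (p i / q i)`. -/
def renyiDtop {ι : Type*} [Fintype ι] (p q : ι → ℝ) : EReal :=
  ((Real.log (sSup (Set.range fun i => p i / q i)) : ℝ) : EReal)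

/-- `D_{-∞}(p‖q) = D_∞(q‖p)`. -/
def renyiDbot {ι : Type*} [Fintype ι] (p q : ι → ℝ) : EReal := renyiDtop q p

lemma sigma_sum_const_fiber {k : ℕ} (d : Fin k → ℕ) {M : Type*} [AddCommMonoid M]
    (f : Fin k → M) :
    ∑ x : Σ i : Fin k, Fin (d i), f x.1 = ∑ i, d i • f i := by
  rw [← Finset.univ_sigma_univ, Finset.sum_sigma]
  simp

/-- the fine-graining embedding `Γ`, which replaces the entry `p i` by
`d i` equal entries `p i / d i` (realized on the index set `Σ i, Fin (d i)`, which has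
cardinality `N`), preserves all Rényi divergences relative to the Gibbs-like state
`γ i = d i / N`, turning them into divergences relative to the uniform distribution
on `N` elements: `D_α(p‖γ) = D_α(Γ(p)‖η_N)` for all real `α` and for `α = ±∞`. -/
theorem embedding_preserves_renyi_divergence {k : ℕ} (hk : 0 < k)
    (p : Fin k → ℝ) (hp : IsProb p)
    (d : Fin k → ℕ) (hd : ∀ i, 1 ≤ d i) (N : ℕ) (hN : N = ∑ i, d i)
    (γ : Fin k → ℝ) (hγ : ∀ i, γ i = (d i : ℝ) / (N : ℝ)) :
    (∀ α : ℝ,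
      renyiD α p γ =
        renyiD α (fun x : Σ i : Fin k, Fin (d i) => p x.1 / (d x.1 : ℝ))
          (fun _ : Σ i : Fin k, Fin (d i) => 1 / (N : ℝ))) ∧
    renyiDtop p γ =
      renyiDtop (fun x : Σ i : Fin k, Fin (d i) => p x.1 / (d x.1 : ℝ))
        (fun _ : Σ i : Fin k, Fin (d i) => 1 / (N : ℝ)) ∧
    renyiDbot p γ =
      renyiDbot (fun x : Σ i : Fin k, Fin (d i) => p x.1 / (d x.1 : ℝ))
        (fun _ : Σ i : Fin k, Fin (d i) => 1 / (N : ℝ)) := by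
  have hNpos : 0 < N := by
    rw [hN]
    calc 0 < k := hk
    _ = ∑ _i : Fin k, 1 := by simp
    _ ≤ ∑ i, d i := Finset.sum_le_sum fun i _ => hd i
  have hNR : (0:ℝ) < N := by exact_mod_cast hNpos
  have hdR : ∀ i, (0:ℝ) < (d i : ℝ) := fun i => by exact_mod_cast hd i
  have hsurj : Function.Surjective (Sigma.fst : (Σ i : Fin k, Fin (d i)) → Fin k) :=
    fun i => ⟨⟨i, ⟨0, hd i⟩⟩, rfl⟩
  refine ⟨fun α => ?_, ?_, ?_⟩
  · by_cases h0 : α = 0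
    · subst h0
      simp only [renyiD, if_pos rfl]
      have hcond : ∀ x : Σ i : Fin k, Fin (d i),
          (p x.1 / (d x.1 : ℝ) ≠ 0) = (p x.1 ≠ 0) := by
        intro x
        simp [div_eq_zero_iff, (hdR x.1).ne']
      have hsum : ∑ i ∈ Finset.univ.filter (fun i => p i ≠ 0), γ i
          = ∑ x ∈ Finset.univ.filter
              (fun x : Σ i : Fin k, Fin (d i) => p x.1 / (d x.1 : ℝ) ≠ 0), 1 / (N:ℝ) := by
        calc ∑ i ∈ Finset.univ.filter (fun i => p i ≠ 0), γ i
            = ∑ i, if p i ≠ 0 then γ i else 0 := by rw [Finset.sum_filter]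
        _ = ∑ i, d i • (if p i ≠ 0 then (1:ℝ) / N else 0) := by
            refine Finset.sum_congr rfl fun i _ => ?_
            by_cases hpi : p i = 0 <;> simp [hpi, hγ, nsmul_eq_mul, div_eq_mul_inv, mul_comm]
        _ = ∑ x : Σ i : Fin k, Fin (d i), if p x.1 ≠ 0 then (1:ℝ) / N else 0 :=
            (sigma_sum_const_fiber d _).symm
        _ = ∑ x ∈ Finset.univ.filter
              (fun x : Σ i : Fin k, Fin (d i) => p x.1 / (d x.1 : ℝ) ≠ 0), 1 / (N:ℝ) := by
            rw [Finset.sum_filter]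
            refine Finset.sum_congr rfl fun x _ => ?_
            by_cases hpx : p x.1 = 0 <;> simp [hpx, (hdR x.1).ne']
      rw [hsum]
      simp
    · by_cases h1 : α = 1
      · subst h1
        simp only [renyiD, if_neg h0, if_pos rfl, if_neg one_ne_zero]
        norm_num only
        have hs : (∑ i, p i * (Real.log (p i) - Real.log (γ i)))
            = ∑ x : Σ i : Fin k, Fin (d i),
              p x.1 / (d x.1 : ℝ) * (Real.log (p x.1 / (d x.1 : ℝ)) - Real.log (1 / N)) := by
          rw [sigma_sum_const_fiber d
            (fun i => p i / (d i : ℝ) * (Real.log (p i / (d i : ℝ)) - Real.log (1 / N)))]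
          refine Finset.sum_congr rfl fun i _ => ?_
          rw [nsmul_eq_mul]
          by_cases hpi : p i = 0
          · simp [hpi]
          · have hdd : (d i:ℝ) * (p i / (d i:ℝ)) = p i := by rw [mul_comm, div_mul_cancel₀ _ (hdR i).ne']
            rw [Real.log_div hpi (hdR i).ne', Real.log_div one_ne_zero hNR.ne',
              Real.log_one, hγ, Real.log_div (hdR i).ne' hNR.ne', ← mul_assoc, hdd]
            ring
        rw [hs]
        simp
      · simp only [renyiD, if_neg h0, if_neg h1]
        congr 2
        rw [sigma_sum_const_fiber d
          (fun i => (ENNReal.ofReal (p i / (d i : ℝ))) ^ α *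
            (ENNReal.ofReal (1 / (N : ℝ))) ^ (1 - α))]
        refine (Finset.sum_congr rfl fun i _ => ?_).symm
        rw [nsmul_eq_mul]
        have hc0 : (d i : ℝ≥0∞) ≠ 0 := by
          exact_mod_cast (Nat.lt_of_lt_of_le Nat.zero_lt_one (hd i)).ne'
        have hcT : (d i : ℝ≥0∞) ≠ ⊤ := ENNReal.natCast_ne_top _
        have hn0 : (N : ℝ≥0∞) ≠ 0 := by exact_mod_cast hNpos.ne'
        rw [hγ, ENNReal.ofReal_div_of_pos (hdR i), ENNReal.ofReal_div_of_pos hNR,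
          ENNReal.ofReal_div_of_pos hNR, ENNReal.ofReal_natCast, ENNReal.ofReal_natCast,
          ENNReal.ofReal_one]
        rw [div_eq_mul_inv, div_eq_mul_inv, div_eq_mul_inv,
          ENNReal.mul_rpow_of_ne_top ENNReal.ofReal_ne_top (ENNReal.inv_ne_top.mpr hc0),
          ENNReal.mul_rpow_of_ne_top hcT (ENNReal.inv_ne_top.mpr hn0),
          ENNReal.mul_rpow_of_ne_top (by simp : (1:ℝ≥0∞) ≠ ⊤) (ENNReal.inv_ne_top.mpr hn0),
          ENNReal.inv_rpow, ENNReal.inv_rpow, ENNReal.one_rpow]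
        have hcc : (d i : ℝ≥0∞) ^ (1 - α) = (d i : ℝ≥0∞) * ((d i : ℝ≥0∞) ^ α)⁻¹ := by
          rw [sub_eq_add_neg, ENNReal.rpow_add _ _ hc0 hcT, ENNReal.rpow_one, ENNReal.rpow_neg]
        rw [hcc]; ring
  · unfold renyiDtop
    congr 2
    have : (fun x : Σ i : Fin k, Fin (d i) => (p x.1 / (d x.1 : ℝ)) / (1 / (N:ℝ)))
        = (fun i => p i / γ i) ∘ Sigma.fst := by
      funext x
      simp only [Function.comp_apply, hγ]
      have h1 := (hdR x.1).ne'
      have h2 := hNR.ne'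
      field_simp
    rw [this, hsurj.range_comp]
  · unfold renyiDbot renyiDtop
    congr 2
    have : (fun x : Σ i : Fin k, Fin (d i) => (1 / (N:ℝ)) / (p x.1 / (d x.1 : ℝ)))
        = (fun i => γ i / p i) ∘ Sigma.fst := by
      funext x
      simp only [Function.comp_apply, hγ]
      rw [div_div_eq_mul_div, one_div_mul_eq_div, div_div]
    rw [this, hsurj.range_comp]



end
end

section
/- Let p ≠ q be probability distributions on Fin k with q of full rank. Then for every real α with α ≠ 0 and every δ with 0 < δ < 1, one has the strict inequality D_α((1−δ)·p + δ·q ‖ q) < D_α(p ‖ q) (as extended reals). -/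
/-!
For `α ∉ {0, 1}`, `D_α(p‖q)` is a monotone function of the `f`-divergence `∑ qᵢ f(pᵢ/qᵢ)` with
`f x = x ^ α`: increasing when `f` is convex (`α < 0` or `α > 1`), decreasing when it is concave
(`0 < α < 1`); and `D_1` is the `f`-divergence for `f x = x log x`. Mixing replaces each ratio
`pᵢ/qᵢ` by `(1 - δ) pᵢ/qᵢ + δ`, moving it towards its `q`-mean `1`. Convexity along each such
segment, strict where `pᵢ ≠ qᵢ`, followed by Jensen's inequality `f 1 ≤ ∑ qᵢ f(pᵢ/qᵢ)`, makes the
`f`-divergence strictly smaller (larger in the concave case). For `α < 0` a zero of `p` makes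
`D_α(p‖q) = ∞`, while the mixture has full support and finite divergence.
-/

open scoped BigOperators ENNReal Classical

noncomputable section

open Finset Real

lemma strictConvexOn_rpow_of_neg {α : ℝ} (hα : α < 0) :
    StrictConvexOn ℝ (Set.Ioi 0) fun x : ℝ => x ^ α := by
  have hlog : StrictConvexOn ℝ (Set.Ioi 0) fun x : ℝ => log x * α := by
    refine ⟨convex_Ioi 0, fun x hx y hy hxy a b ha hb hab => ?_⟩
    have h := strictConcaveOn_log_Ioi.2 hx hy hxy ha hb hab
    simp only [smul_eq_mul] at h ⊢
    nlinarith
  refine (convexOn_exp.subset (Set.subset_univ _) ?_).comp_strictConvexOn hlog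
    (exp_strictMono.strictMonoOn _) |>.congr fun x hx => ?_
  · exact (isPreconnected_Ioi.image _ <|
      (continuousOn_log.mono fun x hx => ne_of_gt hx).mul continuousOn_const).convex
  · exact (rpow_def_of_pos hx α).symm

section FDivergence

variable {ι : Type*} [Fintype ι] {D : Set ℝ} {f : ℝ → ℝ} {w x : ι → ℝ} {δ : ℝ}

lemma StrictConvexOn.sum_mul_map_shrink_lt (hf : StrictConvexOn ℝ D f) (hw : ∀ i, 0 < w i)
    (hw1 : ∑ i, w i = 1) (hx : ∀ i, x i ∈ D) (hne : ∃ i, x i ≠ ∑ j, w j * x j)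
    (hδ0 : 0 < δ) (hδ1 : δ < 1) :
    ∑ i, w i * f ((1 - δ) * x i + δ * ∑ j, w j * x j) < ∑ i, w i * f (x i) := by
  set c := ∑ j, w j * x j
  obtain ⟨i₀, hi₀⟩ := hne
  have hc : c ∈ D := hf.1.sum_mem (fun i _ => (hw i).le) hw1 fun i _ => hx i
  have jensen : f c ≤ ∑ i, w i * f (x i) :=
    hf.convexOn.map_sum_le (fun i _ => (hw i).le) hw1 fun i _ => hx i
  have hδ : 0 < 1 - δ := by linarith
  have step : ∀ i, f ((1 - δ) * x i + δ * c) ≤ (1 - δ) * f (x i) + δ * f c := fun i =>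
    hf.convexOn.2 (hx i) hc hδ.le hδ0.le (by ring)
  have step_strict : f ((1 - δ) * x i₀ + δ * c) < (1 - δ) * f (x i₀) + δ * f c :=
    hf.2 (hx i₀) hc hi₀ hδ hδ0 (by ring)
  calc ∑ i, w i * f ((1 - δ) * x i + δ * c)
      < ∑ i, w i * ((1 - δ) * f (x i) + δ * f c) :=
        sum_lt_sum (fun i _ => mul_le_mul_of_nonneg_left (step i) (hw i).le)
          ⟨i₀, mem_univ _, mul_lt_mul_of_pos_left step_strict (hw i₀)⟩
    _ = (1 - δ) * ∑ i, w i * f (x i) + δ * f c := by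
        simp only [mul_add, sum_add_distrib, mul_left_comm _ (1 - δ), ← mul_sum, ← sum_mul, hw1,
          one_mul]
    _ ≤ ∑ i, w i * f (x i) := by nlinarith

def fDiv (f : ℝ → ℝ) (p q : ι → ℝ) : ℝ :=
  ∑ i, q i * f (p i / q i)

variable {p q : ι → ℝ}

lemma StrictConvexOn.fDiv_mix_lt (hf : StrictConvexOn ℝ D f) (hq : ∀ i, 0 < q i)
    (hq1 : ∑ i, q i = 1) (hp1 : ∑ i, p i = 1) (hpq : p ≠ q) (hD : ∀ i, p i / q i ∈ D)
    (hδ0 : 0 < δ) (hδ1 : δ < 1) :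
    fDiv f (fun i => (1 - δ) * p i + δ * q i) q < fDiv f p q := by
  have hmean : ∑ j, q j * (p j / q j) = 1 := by
    simpa only [mul_div_cancel₀ _ (hq _).ne'] using hp1
  have hne : ∃ i, p i / q i ≠ ∑ j, q j * (p j / q j) := by
    obtain ⟨i, hi⟩ := Function.ne_iff.mp hpq
    exact ⟨i, hmean ▸ fun h => hi ((div_eq_one_iff_eq (hq i).ne').mp h)⟩
  have hmix : ∀ i, ((1 - δ) * p i + δ * q i) / q i
      = (1 - δ) * (p i / q i) + δ * ∑ j, q j * (p j / q j) := fun i => by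
    rw [hmean]
    field_simp [(hq i).ne']
  simpa only [fDiv, hmix] using hf.sum_mul_map_shrink_lt hq hq1 hD hne hδ0 hδ1

lemma StrictConcaveOn.fDiv_lt_fDiv_mix (hf : StrictConcaveOn ℝ D f) (hq : ∀ i, 0 < q i)
    (hq1 : ∑ i, q i = 1) (hp1 : ∑ i, p i = 1) (hpq : p ≠ q) (hD : ∀ i, p i / q i ∈ D)
    (hδ0 : 0 < δ) (hδ1 : δ < 1) :
    fDiv f p q < fDiv f (fun i => (1 - δ) * p i + δ * q i) q := by
  simpa only [fDiv, Pi.neg_apply, mul_neg, sum_neg_distrib, neg_lt_neg_iff] using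
    hf.neg.fDiv_mix_lt hq hq1 hp1 hpq hD hδ0 hδ1

end FDivergence

section Renyi

variable {ι : Type*} [Fintype ι] {p q : ι → ℝ} {α δ : ℝ}

lemma IsProb.mix (hp : IsProb p) (hq : IsProb q) (hδ0 : 0 ≤ δ) (hδ1 : δ ≤ 1) :
    IsProb fun i => (1 - δ) * p i + δ * q i := by
  refine ⟨fun i => add_nonneg (mul_nonneg (by linarith) (hp.1 i)) (mul_nonneg hδ0 (hq.1 i)), ?_⟩
  rw [sum_add_distrib, ← mul_sum, ← mul_sum, hp.2, hq.2]
  ring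

lemma IsProb.mix_pos (hp : IsProb p) (hq : ∀ i, 0 < q i) (hδ0 : 0 < δ) (hδ1 : δ ≤ 1)
    (i : ι) : 0 < (1 - δ) * p i + δ * q i :=
  add_pos_of_nonneg_of_pos (mul_nonneg (sub_nonneg.2 hδ1) (hp.1 i)) (mul_pos hδ0 (hq i))

lemma fDiv_rpow_pos (hp : IsProb p) (hq : ∀ i, 0 < q i) : 0 < fDiv (· ^ α) p q := by
  obtain ⟨i, -, hi⟩ : ∃ i ∈ univ, (0 : ℝ) < p i :=
    exists_lt_of_sum_lt (by simp [hp.2] : ∑ _ : ι, (0 : ℝ) < ∑ i, p i)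
  exact sum_pos' (fun j _ => by have := hp.1 j; have := hq j; positivity)
    ⟨i, mem_univ _, by have := hq i; positivity⟩

lemma ENNReal.ofReal_rpow_mul_ofReal_rpow_one_sub {x y : ℝ} (hx : 0 ≤ x) (hy : 0 < y)
    (hfin : 0 < α ∨ 0 < x) :
    ENNReal.ofReal x ^ α * ENNReal.ofReal y ^ (1 - α) = ENNReal.ofReal (y * (x / y) ^ α) := by
  have hxα : ENNReal.ofReal x ^ α = ENNReal.ofReal (x ^ α) := by
    rcases hfin with h | h
    · exact ENNReal.ofReal_rpow_of_nonneg hx h.le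
    · exact ENNReal.ofReal_rpow_of_pos h
  rw [hxα, ENNReal.ofReal_rpow_of_pos hy, ← ENNReal.ofReal_mul (by positivity),
    div_rpow hx hy.le, Real.rpow_sub hy, Real.rpow_one]
  congr 1
  field_simp

lemma renyiD_eq_log_fDiv (hα0 : α ≠ 0) (hα1 : α ≠ 1) (hp : IsProb p) (hq : ∀ i, 0 < q i)
    (hfin : 0 < α ∨ ∀ i, 0 < p i) :
    renyiD α p q = ((Real.sign α / (α - 1) * log (fDiv (· ^ α) p q) : ℝ) : EReal) := by
  have hpos := fDiv_rpow_pos (α := α) hp hq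
  simp only [fDiv] at hpos ⊢
  rw [renyiD, if_neg hα0, if_neg hα1, sum_congr rfl fun i _ =>
    ENNReal.ofReal_rpow_mul_ofReal_rpow_one_sub (hp.1 i) (hq i) (hfin.imp_right (· i)),
    ← ENNReal.ofReal_sum_of_nonneg fun i _ => by have := hp.1 i; have := hq i; positivity,
    elog, if_neg (ENNReal.ofReal_pos.mpr hpos).ne', if_neg ENNReal.ofReal_ne_top,
    ENNReal.toReal_ofReal hpos.le, ← EReal.coe_mul]

lemma renyiD_eq_top_of_neg {j : ι} (hα : α < 0) (hpj : p j = 0) (hqj : 0 < q j) :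
    renyiD α p q = ⊤ := by
  have hsum : ∑ i, ENNReal.ofReal (p i) ^ α * ENNReal.ofReal (q i) ^ (1 - α) = ⊤ := by
    refine ENNReal.sum_eq_top.mpr ⟨j, mem_univ j, ?_⟩
    rw [hpj, ENNReal.ofReal_zero, ENNReal.zero_rpow_of_neg hα]
    exact ENNReal.top_mul (ENNReal.rpow_pos (ENNReal.ofReal_pos.mpr hqj) ENNReal.ofReal_ne_top).ne'
  rw [renyiD, if_neg hα.ne, if_neg (by linarith), hsum, elog, if_neg ENNReal.top_ne_zero,
    if_pos rfl]
  refine EReal.coe_mul_top_of_pos ?_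
  rw [Real.sign_of_neg hα]
  exact div_pos_of_neg_of_neg (by norm_num) (by linarith)

lemma renyiD_one (hq : ∀ i, q i ≠ 0) :
    renyiD 1 p q = ((fDiv (fun x => x * log x) p q : ℝ) : EReal) := by
  rw [renyiD, if_neg one_ne_zero, if_pos rfl, fDiv]
  congr 1
  refine sum_congr rfl fun i _ => ?_
  rcases eq_or_ne (p i) 0 with h | h
  · simp [h]
  · rw [log_div h (hq i)]
    field_simp [hq i]

lemma renyiD_mix_lt_of_ne_one (hα0 : α ≠ 0) (hα1 : α ≠ 1) (hp : IsProb p) (hq : IsProb q)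
    (hqpos : ∀ i, 0 < q i) (hpq : p ≠ q) (hfin : 0 < α ∨ ∀ i, 0 < p i)
    (hδ0 : 0 < δ) (hδ1 : δ < 1) :
    renyiD α (fun i => (1 - δ) * p i + δ * q i) q < renyiD α p q := by
  have hm := hp.mix hq hδ0.le hδ1.le
  rw [renyiD_eq_log_fDiv hα0 hα1 hm hqpos (.inr (hp.mix_pos hqpos hδ0 hδ1.le)),
    renyiD_eq_log_fDiv hα0 hα1 hp hqpos hfin, EReal.coe_lt_coe_iff]
  rcases lt_or_gt_of_ne hα0 with hneg | hpos
  · have hpfull := hfin.resolve_left hneg.not_gt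
    have hc : 0 < Real.sign α / (α - 1) := by
      rw [Real.sign_of_neg hneg]
      exact div_pos_of_neg_of_neg (by norm_num) (by linarith)
    refine mul_lt_mul_of_pos_left (log_lt_log (fDiv_rpow_pos hm hqpos) ?_) hc
    exact (strictConvexOn_rpow_of_neg hneg).fDiv_mix_lt hqpos hq.2 hp.2 hpq
      (fun i => div_pos (hpfull i) (hqpos i)) hδ0 hδ1
  have hD : ∀ i, p i / q i ∈ Set.Ici 0 := fun i => div_nonneg (hp.1 i) (hqpos i).le
  rcases lt_or_gt_of_ne hα1 with hlt | hgt
  · have hc : Real.sign α / (α - 1) < 0 := by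
      rw [Real.sign_of_pos hpos]
      exact div_neg_of_pos_of_neg one_pos (by linarith)
    refine mul_lt_mul_of_neg_left (log_lt_log (fDiv_rpow_pos hp hqpos) ?_) hc
    exact (Real.strictConcaveOn_rpow hpos hlt).fDiv_lt_fDiv_mix hqpos hq.2 hp.2 hpq hD hδ0 hδ1
  · have hc : 0 < Real.sign α / (α - 1) := by
      rw [Real.sign_of_pos hpos]
      exact div_pos one_pos (by linarith)
    refine mul_lt_mul_of_pos_left (log_lt_log (fDiv_rpow_pos hm hqpos) ?_) hc
    exact (strictConvexOn_rpow hgt).fDiv_mix_lt hqpos hq.2 hp.2 hpq hD hδ0 hδ1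

end Renyi

/-- mixing towards a full-rank reference state strictly decreases the
Rényi divergence: for `p ≠ q`, `q` full rank, `α ≠ 0` and `0 < δ < 1`,
`D_α((1-δ)p + δq ‖ q) < D_α(p ‖ q)` as extended reals. -/
theorem renyiD_strict_decrease_of_mixing {k : ℕ} (p q : Fin k → ℝ)
    (hp : IsProb p) (hq : IsProb q) (hqfull : ∀ i, 0 < q i) (hpq : p ≠ q)
    (α : ℝ) (hα : α ≠ 0) (δ : ℝ) (hδ0 : 0 < δ) (hδ1 : δ < 1) :
    renyiD α (fun i => (1 - δ) * p i + δ * q i) q < renyiD α p q := by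
  rcases eq_or_ne α 1 with rfl | hα1
  · rw [renyiD_one fun i => (hqfull i).ne', renyiD_one fun i => (hqfull i).ne',
      EReal.coe_lt_coe_iff]
    exact strictConvexOn_mul_log.fDiv_mix_lt hqfull hq.2 hp.2 hpq
      (fun i => div_nonneg (hp.1 i) (hqfull i).le) hδ0 hδ1
  by_cases hfin : 0 < α ∨ ∀ i, 0 < p i
  · exact renyiD_mix_lt_of_ne_one hα hα1 hp hq hqfull hpq hfin hδ0 hδ1
  push Not at hfin
  obtain ⟨hα_nonpos, j, hj⟩ := hfin
  rw [renyiD_eq_top_of_neg (lt_of_le_of_ne hα_nonpos hα) (le_antisymm hj (hp.1 j)) (hqfull j),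
    renyiD_eq_log_fDiv hα hα1 (hp.mix hq hδ0.le hδ1.le) hqfull
      (.inr (hp.mix_pos hqfull hδ0 hδ1.le))]
  exact EReal.coe_lt_top _

end
end

section
/- Let 1 ≤ l < n and let Λ be a channel on distributions on Fin n with matrix M. Suppose t and t' are probability distributions on Fin n such that t i > 0 for all i ≤ l, t i = 0 for all i > l, t' i = 0 for all i > l, and Λ(t) = t'. Suppose further that Λ(w) = w for some full-rank probability distribution w on Fin n. Then M j i = 0 whenever exactly one of i, j exceeds l; that is, Λ decomposes as a direct sum Λ₁ ⊕ Λ₂ of a channel Λ₁ acting on the first l coordinates and a channel Λ₂ acting on the remaining n − l coordinates. -/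
open scoped BigOperators ENNReal Classical

noncomputable section

/-- A channel (stochastic map) given by a matrix of transition probabilities. -/
def IsChannel {A B : Type*} [Fintype A] [Fintype B] (M : B → A → ℝ) : Prop :=
  (∀ b a, 0 ≤ M b a) ∧ ∀ a, ∑ b, M b a = 1

/-- Action of a channel on a distribution. -/
def chApply {A B : Type*} [Fintype A] [Fintype B] (M : B → A → ℝ) (p : A → ℝ) : B → ℝ :=
  fun b => ∑ a, M b a * p a

/-- a channel fixing a full-rank distribution which maps a distribution
supported (with full support) on the first `l` coordinates to one supported on the
first `l` coordinates must decompose as a direct sum: the transition probability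
`M j i` vanishes whenever exactly one of `i, j` lies beyond the first `l` coordinates. -/
theorem channel_direct_sum_decomposition {n : ℕ} (l : ℕ) (hl1 : 1 ≤ l) (hln : l < n)
    (M : Fin n → Fin n → ℝ) (hM : IsChannel M)
    (t t' : Fin n → ℝ) (ht : IsProb t) (ht' : IsProb t')
    (htpos : ∀ i : Fin n, (i : ℕ) < l → 0 < t i)
    (htzero : ∀ i : Fin n, l ≤ (i : ℕ) → t i = 0)
    (ht'zero : ∀ i : Fin n, l ≤ (i : ℕ) → t' i = 0)
    (hMt : chApply M t = t')
    (w : Fin n → ℝ) (hw : IsProb w) (hwfull : ∀ i, 0 < w i)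
    (hMw : chApply M w = w) :
    ∀ i j : Fin n,
      (((i : ℕ) < l ∧ l ≤ (j : ℕ)) ∨ (l ≤ (i : ℕ) ∧ (j : ℕ) < l)) → M j i = 0 := by
  obtain ⟨hMnn, hMcol⟩ := hM
  -- Step 1: if i < l and l ≤ j then M j i = 0
  have step1 : ∀ i j : Fin n, (i : ℕ) < l → l ≤ (j : ℕ) → M j i = 0 := by
    intro i j hi hj
    have h0 : ∑ a, M j a * t a = 0 := by
      have := congrFun hMt j
      simp only [chApply] at this
      rw [this]; exact ht'zero j hj
    have hterm : M j i * t i = 0 := by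
      have := (Finset.sum_eq_zero_iff_of_nonneg
        (fun a _ => mul_nonneg (hMnn j a) (ht.1 a))).mp h0 i (Finset.mem_univ i)
      exact this
    rcases mul_eq_zero.mp hterm with h | h
    · exact h
    · exact absurd h (ne_of_gt (htpos i hi))
  -- the set of indices below l
  set S : Finset (Fin n) := Finset.univ.filter (fun j : Fin n => (j : ℕ) < l) with hS
  -- Step 2: for i < l, the column sum restricted to S is 1
  have col1 : ∀ i : Fin n, (i : ℕ) < l → ∑ j ∈ S, M j i = 1 := by
    intro i hi
    have := hMcol i
    rw [← Finset.sum_filter_add_sum_filter_not Finset.univ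
      (fun j : Fin n => (j : ℕ) < l) (fun j => M j i)] at this
    have hz : ∑ j ∈ Finset.univ.filter (fun j : Fin n => ¬ (j : ℕ) < l),
        M j i = 0 := by
      apply Finset.sum_eq_zero
      intro j hj
      simp only [Finset.mem_filter, not_lt] at hj
      exact step1 i j hi hj.2
    rw [hz, add_zero] at this
    exact this
  -- Step 3: fixed point equation restricted to S
  have key : ∑ i ∈ Sᶜ, (∑ j ∈ S, M j i) * w i = 0 := by
    have hfix : ∑ j ∈ S, w j = ∑ j ∈ S, ∑ i, M j i * w i := by
      apply Finset.sum_congr rfl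
      intro j _
      have := congrFun hMw j
      simp only [chApply] at this
      rw [this]
    rw [Finset.sum_comm] at hfix
    have hsplit : ∑ i : Fin n, ∑ j ∈ S, M j i * w i
        = ∑ i ∈ S, w i + ∑ i ∈ Sᶜ, (∑ j ∈ S, M j i) * w i := by
      rw [← Finset.sum_add_sum_compl S]
      congr 1
      · apply Finset.sum_congr rfl
        intro i hi
        rw [← Finset.sum_mul, col1 i (by simpa [hS] using hi), one_mul]
      · apply Finset.sum_congr rfl
        intro i _
        rw [Finset.sum_mul]
    rw [hsplit] at hfix
    linarith [hfix]
  -- conclude step 2': if l ≤ i and j < l then M j i = 0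
  have step2 : ∀ i j : Fin n, l ≤ (i : ℕ) → (j : ℕ) < l → M j i = 0 := by
    intro i j hi hj
    have hiS : i ∈ Sᶜ := by simpa [hS, not_lt] using hi
    have hterm : (∑ j' ∈ S, M j' i) * w i = 0 :=
      (Finset.sum_eq_zero_iff_of_nonneg (fun a _ =>
        mul_nonneg (Finset.sum_nonneg fun j' _ => hMnn j' a) (le_of_lt (hwfull a)))).mp
        key i hiS
    have hsum0 : ∑ j' ∈ S, M j' i = 0 := by
      rcases mul_eq_zero.mp hterm with h | h
      · exact h
      · exact absurd h (ne_of_gt (hwfull i))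
    have := (Finset.sum_eq_zero_iff_of_nonneg
      (fun j' _ => hMnn j' i)).mp hsum0 j (by simp [hS, hj])
    exact this
  intro i j h
  rcases h with ⟨hi, hj⟩ | ⟨hi, hj⟩
  · exact step1 i j hi hj
  · exact step2 i j hi hj

end
end

section
/- Let ε ≥ 0, let d ≥ 2 and N ≥ 2, and assume ε / log N ≤ 1/2. Let p and q be probability distributions on Fin d, let r be a probability distribution on Fin N, and suppose there exists a probability distribution s on Fin d × Fin N such that p ⊗ r ≻ s and ‖s − q ⊗ r‖ ≤ ε / log N. Then the Shannon entropies satisfy H₁(p) ≤ H₁(q) + ε + ε · (log d)/(log N) + h(ε / log N), where h(x) := −x·log x − (1−x)·log(1−x) is the binary entropy. -/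
open scoped BigOperators ENNReal Classical

noncomputable section

/-- The decreasing rearrangement of a vector. -/
def descSort {k : ℕ} (x : Fin k → ℝ) : Fin k → ℝ :=
  fun i => x (Tuple.sort (fun j => - x j) i)

/-- `x` majorizes `y`: all partial sums of the decreasing rearrangement of `x`
dominate those of `y`, and the total sums coincide. -/
def MajorizesFin {k : ℕ} (x y : Fin k → ℝ) : Prop :=
  (∀ l : ℕ, ∑ i ∈ Finset.univ.filter (fun i : Fin k => (i : ℕ) < l), descSort y i
      ≤ ∑ i ∈ Finset.univ.filter (fun i : Fin k => (i : ℕ) < l), descSort x i) ∧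
  ∑ i, x i = ∑ i, y i

/-- Total variation distance between two vectors. -/
def tvDist {ι : Type*} [Fintype ι] (p q : ι → ℝ) : ℝ := (1 / 2) * ∑ i, |p i - q i|

/-- The Shannon entropy `H₁`. -/
def shannonH {ι : Type*} [Fintype ι] (p : ι → ℝ) : ℝ := - ∑ i, p i * Real.log (p i)

/-- The binary entropy function. -/
def binEnt (x : ℝ) : ℝ := -x * Real.log x - (1 - x) * Real.log (1 - x)

/-!
Majorization `p ⊗ r ≻ s` gives `H(p) + H(r) ≤ H(s)` by Schur concavity of entropy: comparing
`-x log x` with its tangent at the decreasing rearrangement of `s`, the slopes `-log s↓ᵢ - 1`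
increase with `i`, so summation by parts against the nonnegative partial sums of `(p ⊗ r)↓ - s↓`
gives the sign. A one-sided Fannes inequality, obtained by splitting `s` and `q ⊗ r` along their
common part `min s (q ⊗ r)`, bounds `H(s) ≤ H(q) + H(r) + T log (d N) + h(T)` with
`T = ‖s - q ⊗ r‖`. As `h` increases on `[0, 1/2]`, `T` may be replaced by `ε / log N`, and `H(r)`
cancels.
-/

open Real Finset

section Entropy

variable {ι κ : Type*} [Fintype ι] [Fintype κ]

lemma shannonH_eq_sum_negMulLog (p : ι → ℝ) : shannonH p = ∑ i, negMulLog (p i) := by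
  simp [shannonH, negMulLog, sum_neg_distrib]

lemma shannonH_comp_equiv (e : κ ≃ ι) (p : ι → ℝ) : shannonH (fun k => p (e k)) = shannonH p := by
  simp only [shannonH_eq_sum_negMulLog]
  exact e.sum_comp (fun i => negMulLog (p i))

lemma shannonH_mul {p : ι → ℝ} {r : κ → ℝ} (hp : ∑ i, p i = 1) (hr : ∑ j, r j = 1) :
    shannonH (fun z : ι × κ => p z.1 * r z.2) = shannonH p + shannonH r := by
  simp only [shannonH_eq_sum_negMulLog, Fintype.sum_prod_type, negMulLog_mul, sum_add_distrib,
    ← sum_mul, ← mul_sum, hp, hr, one_mul]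

lemma IsProb.mul {p : ι → ℝ} {r : κ → ℝ} (hp : IsProb p) (hr : IsProb r) :
    IsProb (fun z : ι × κ => p z.1 * r z.2) :=
  ⟨fun z => mul_nonneg (hp.1 _) (hr.1 _), by
    rw [Fintype.sum_prod_type, ← Fintype.sum_mul_sum, hp.2, hr.2, one_mul]⟩

lemma binEnt_eq_binEntropy : binEnt = binEntropy := by
  funext x
  rw [binEntropy_eq_negMulLog_add_negMulLog_one_sub]
  simp only [binEnt, negMulLog]
  ring

lemma binEnt_le_binEnt {x y : ℝ} (hx : 0 ≤ x) (hxy : x ≤ y) (hy : y ≤ 1 / 2) :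
    binEnt x ≤ binEnt y := by
  rw [binEnt_eq_binEntropy]
  exact binEntropy_strictMonoOn.monotoneOn ⟨hx, by linarith⟩ ⟨hx.trans hxy, by linarith⟩ hxy

end Entropy

section Fannes

variable {ι : Type*} [Fintype ι]

lemma negMulLog_add_le {a b : ℝ} (ha : 0 ≤ a) (hb : 0 ≤ b) :
    negMulLog (a + b) ≤ negMulLog a + negMulLog b := by
  rcases ha.eq_or_lt with rfl | ha
  · simp
  have hab : log a ≤ log (a + b) := log_le_log ha (by linarith)
  have hba : b * log b ≤ b * log (a + b) := by
    rcases hb.eq_or_lt with rfl | hb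
    · simp
    exact mul_le_mul_of_nonneg_left (log_le_log hb (by linarith)) hb.le
  simp only [negMulLog]
  nlinarith

lemma sum_negMulLog_le (a : ι → ℝ) (ha : ∀ i, 0 ≤ a i) :
    ∑ i, negMulLog (a i) ≤ negMulLog (∑ i, a i) + (∑ i, a i) * log (Fintype.card ι) := by
  rcases isEmpty_or_nonempty ι with hι | hι
  · simp
  set n : ℝ := (Fintype.card ι : ℝ)
  have hn : 0 < n := by positivity
  have hjensen := concaveOn_negMulLog.le_map_sum (t := univ) (w := fun _ => n⁻¹) (p := a)
    (fun _ _ => by positivity) (by simp [n]) (fun i _ => ha i)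
  have hinv : negMulLog n⁻¹ = n⁻¹ * log n := by simp [negMulLog, log_inv]
  simp only [smul_eq_mul, ← mul_sum] at hjensen
  rw [negMulLog_mul, hinv] at hjensen
  have hscaled : n⁻¹ * ∑ i, negMulLog (a i) ≤
      n⁻¹ * (negMulLog (∑ i, a i) + (∑ i, a i) * log n) := by
    linarith
  exact le_of_mul_le_mul_left hscaled (inv_pos.2 hn)

lemma mul_negMulLog_div_le {m q s : ℝ} (hm : 0 ≤ m) (hmq : m ≤ q) (hs : 0 < s)
    (hqm : q - m ≤ 1 - s) : s * negMulLog (m / s) ≤ negMulLog q := by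
  rcases (show s ≤ 1 by linarith).eq_or_lt with rfl | hs1
  · rw [div_one, one_mul, le_antisymm (by linarith) hmq]
  -- `q` is the mixture of `m / s` and `(q - m) / (1 - s)` with weights `s` and `1 - s`
  have hrest : 0 ≤ (q - m) / (1 - s) := div_nonneg (by linarith) (by linarith)
  have hconc := concaveOn_negMulLog.2 (Set.mem_Ici.2 (div_nonneg hm hs.le))
    (Set.mem_Ici.2 hrest) hs.le (sub_nonneg.2 hs1.le) (add_sub_cancel s 1)
  have hmix : s • (m / s) + (1 - s) • ((q - m) / (1 - s)) = q := by
    simp only [smul_eq_mul]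
    field_simp [(sub_pos.2 hs1).ne']
    ring
  have hnn : 0 ≤ negMulLog ((q - m) / (1 - s)) :=
    negMulLog_nonneg hrest ((div_le_one (sub_pos.2 hs1)).2 hqm)
  rw [hmix, smul_eq_mul, smul_eq_mul] at hconc
  nlinarith [mul_nonneg (sub_nonneg.2 hs1.le) hnn]

lemma sum_negMulLog_le_of_le {m q : ι → ℝ} (hm : ∀ i, 0 ≤ m i) (hmq : ∀ i, m i ≤ q i)
    (hq : ∑ i, q i = 1) : ∑ i, negMulLog (m i) ≤ ∑ i, negMulLog (q i) + negMulLog (∑ i, m i) := by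
  set s := ∑ i, m i
  have hgap : ∀ i, q i - m i ≤ 1 - s := fun i => by
    rw [← hq, ← sum_sub_distrib]
    exact single_le_sum (fun j _ => sub_nonneg.2 (hmq j)) (mem_univ i)
  rcases (show 0 ≤ s from sum_nonneg fun i _ => hm i).eq_or_lt with hs | hs
  · have hm0 : ∀ i, m i = 0 := fun i =>
      (sum_eq_zero_iff_of_nonneg fun j _ => hm j).1 hs.symm i (mem_univ i)
    rw [← hs, negMulLog_zero, add_zero]
    simp only [hm0, negMulLog_zero, sum_const_zero]
    exact sum_nonneg fun i _ =>
      negMulLog_nonneg ((hm i).trans (hmq i)) (by linarith [hgap i, hm0 i])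
  have hscale : ∀ i, s * negMulLog (m i / s) = negMulLog (m i) - m i / s * negMulLog s := by
    intro i
    have := negMulLog_mul s (m i / s)
    rw [mul_div_cancel₀ _ hs.ne'] at this
    linarith
  have hsum := sum_le_sum fun i (_ : i ∈ univ) => mul_negMulLog_div_le (hm i) (hmq i) hs (hgap i)
  rw [sum_congr rfl fun i _ => hscale i, sum_sub_distrib, ← sum_mul, ← sum_div,
    div_self hs.ne', one_mul] at hsum
  linarith

lemma tvDist_eq_sum_sub_min {p q : ι → ℝ} (h : ∑ i, p i = ∑ i, q i) :
    tvDist p q = ∑ i, (p i - min (p i) (q i)) := by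
  have habs : ∀ i, |p i - q i| = (p i - min (p i) (q i)) + (q i - min (p i) (q i)) := fun i => by
    rcases le_total (p i) (q i) with hpq | hqp
    · rw [min_eq_left hpq, abs_of_nonpos (by linarith)]; ring
    · rw [min_eq_right hqp, abs_of_nonneg (by linarith)]; ring
  simp only [tvDist, habs, sum_add_distrib, sum_sub_distrib, h]
  ring

lemma tvDist_nonneg (p q : ι → ℝ) : 0 ≤ tvDist p q := by
  unfold tvDist
  positivity

theorem shannonH_le_add_tvDist {p q : ι → ℝ} (hp : IsProb p) (hq : IsProb q) :
    shannonH p ≤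
      shannonH q + tvDist p q * log (Fintype.card ι) + binEnt (tvDist p q) := by
  set m := fun i => min (p i) (q i)
  have hT : tvDist p q = ∑ i, (p i - m i) := tvDist_eq_sum_sub_min (hp.2.trans hq.2.symm)
  have hm : ∑ i, m i = 1 - tvDist p q := by rw [hT, sum_sub_distrib, hp.2]; ring
  have hm0 : ∀ i, 0 ≤ m i := fun i => le_min (hp.1 i) (hq.1 i)
  have hsplit : shannonH p ≤ ∑ i, negMulLog (m i) + ∑ i, negMulLog (p i - m i) := by
    rw [shannonH_eq_sum_negMulLog, ← sum_add_distrib]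
    refine sum_le_sum fun i _ => ?_
    have := negMulLog_add_le (hm0 i) (sub_nonneg.2 (min_le_left (p i) (q i)))
    rwa [add_sub_cancel] at this
  have hexcess := sum_negMulLog_le (fun i => p i - m i) fun i => sub_nonneg.2 (min_le_left _ _)
  have hcommon := sum_negMulLog_le_of_le hm0 (fun i => min_le_right _ _) hq.2
  rw [← hT] at hexcess
  rw [hm] at hcommon
  rw [binEnt_eq_binEntropy, binEntropy_eq_negMulLog_add_negMulLog_one_sub,
    shannonH_eq_sum_negMulLog q]
  linarith

end Fannes

section Karamata

lemma sum_range_mul_nonpos_of_monotoneOn {C D : ℕ → ℝ} {k : ℕ} (hC : MonotoneOn C (Set.Iio k))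
    (hD : ∀ l ≤ k, 0 ≤ ∑ n ∈ range l, D n) (hDk : ∑ n ∈ range k, D n = 0) :
    ∑ n ∈ range k, C n * D n ≤ 0 := by
  have habel := sum_range_by_parts C D k
  simp only [smul_eq_mul, hDk, mul_zero, zero_sub] at habel
  rw [habel, neg_nonpos]
  refine sum_nonneg fun n hn => mul_nonneg (sub_nonneg.2 ?_) (hD _ ?_)
  · have hn : n + 1 < k := by rw [mem_range] at hn; omega
    exact hC (Set.mem_Iio.2 (by omega)) (Set.mem_Iio.2 hn) n.le_succ
  · rw [mem_range] at hn; omega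

lemma negMulLog_sub_le_mul {s t : ℝ} (hs : 0 < s) (ht : 0 ≤ t) :
    negMulLog t - negMulLog s ≤ (-log s - 1) * (t - s) := by
  rcases ht.eq_or_lt with rfl | ht
  · simp only [negMulLog]
    linarith
  have hlog := mul_le_mul_of_nonneg_left (log_le_sub_one_of_pos (div_pos hs ht)) ht.le
  rw [log_div hs.ne' ht.ne', mul_sub, mul_sub, mul_one, mul_div_cancel₀ _ ht.ne'] at hlog
  simp only [negMulLog]
  linarith

lemma sum_range_negMulLog_le_of_pos {u v : ℕ → ℝ} {k : ℕ} (hu : ∀ n < k, 0 ≤ u n)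
    (hv : ∀ n < k, 0 < v n) (hv_anti : AntitoneOn v (Set.Iio k))
    (hpart : ∀ l ≤ k, ∑ n ∈ range l, v n ≤ ∑ n ∈ range l, u n)
    (htot : ∑ n ∈ range k, u n = ∑ n ∈ range k, v n) :
    ∑ n ∈ range k, negMulLog (u n) ≤ ∑ n ∈ range k, negMulLog (v n) := by
  have htangent : ∑ n ∈ range k, (negMulLog (u n) - negMulLog (v n)) ≤
      ∑ n ∈ range k, (-log (v n) - 1) * (u n - v n) :=
    sum_le_sum fun n hn => negMulLog_sub_le_mul (hv n (mem_range.1 hn)) (hu n (mem_range.1 hn))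
  have hslope : MonotoneOn (fun n => -log (v n) - 1) (Set.Iio k) := fun n hn m hm hnm => by
    have := log_le_log (hv m hm) (hv_anti hn hm hnm)
    dsimp only
    linarith
  have habel := sum_range_mul_nonpos_of_monotoneOn (D := fun n => u n - v n) hslope
    (fun l hl => by rw [sum_sub_distrib]; linarith [hpart l hl])
    (by rw [sum_sub_distrib, htot, sub_self])
  rw [sum_sub_distrib] at htangent
  linarith

lemma sum_range_negMulLog_le {u v : ℕ → ℝ} {k : ℕ} (hu : ∀ n < k, 0 ≤ u n)
    (hv : ∀ n < k, 0 ≤ v n) (hv_anti : AntitoneOn v (Set.Iio k))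
    (hpart : ∀ l ≤ k, ∑ n ∈ range l, v n ≤ ∑ n ∈ range l, u n)
    (htot : ∑ n ∈ range k, u n = ∑ n ∈ range k, v n) :
    ∑ n ∈ range k, negMulLog (u n) ≤ ∑ n ∈ range k, negMulLog (v n) := by
  induction k with
  | zero => simp
  | succ k ih =>
    rcases (hv k k.lt_succ_self).eq_or_lt with hvk | hvk
    · have huk : u k = 0 := by
        have := hpart k k.le_succ
        rw [sum_range_succ, sum_range_succ, ← hvk] at htot
        linarith [hu k k.lt_succ_self]
      rw [sum_range_succ, sum_range_succ, huk, ← hvk, add_zero, add_zero] at htot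
      simp only [sum_range_succ, huk, ← hvk, negMulLog_zero, add_zero]
      exact ih (fun n hn => hu n (by omega)) (fun n hn => hv n (by omega))
        (hv_anti.mono (Set.Iio_subset_Iio k.le_succ)) (fun l hl => hpart l (by omega)) htot
    · refine sum_range_negMulLog_le_of_pos hu (fun n hn => hvk.trans_le ?_) hv_anti hpart htot
      exact hv_anti (Set.mem_Iio.2 hn) (Set.mem_Iio.2 k.lt_succ_self) (Nat.lt_succ_iff.1 hn)

end Karamata

section Majorization

variable {M : Type*} {k : ℕ}

def extendByZero [Zero M] (w : Fin k → M) (n : ℕ) : M :=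
  if h : n < k then w ⟨n, h⟩ else 0

@[simp]
lemma extendByZero_val [Zero M] (w : Fin k → M) (i : Fin k) : extendByZero w i = w i :=
  dif_pos i.isLt

lemma sum_range_comp_extendByZero {N : Type*} [AddCommMonoid N] [Zero M] (f : M → N)
    (w : Fin k → M) : ∑ n ∈ range k, f (extendByZero w n) = ∑ i, f (w i) := by
  simp [← Fin.sum_univ_eq_sum_range]

lemma sum_range_extendByZero [AddCommMonoid M] (w : Fin k → M) {l : ℕ} (hl : l ≤ k) :
    ∑ n ∈ range l, extendByZero w n = ∑ i ∈ univ.filter (fun i : Fin k => (i : ℕ) < l), w i := by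
  have hrange : range l = (univ.filter fun i : Fin k => (i : ℕ) < l).map Fin.valEmbedding := by
    ext n
    simp only [mem_range, mem_map, mem_filter, mem_univ, true_and, Fin.valEmbedding_apply]
    exact ⟨fun hn => ⟨⟨n, by omega⟩, hn, rfl⟩, fun ⟨i, hi, hin⟩ => hin ▸ hi⟩
  rw [hrange, sum_map]
  simp

lemma antitone_descSort (x : Fin k → ℝ) : Antitone (descSort x) := fun _ _ hij =>
  neg_le_neg_iff.1 (Tuple.monotone_sort (fun j => -x j) hij)

lemma sum_comp_descSort {N : Type*} [AddCommMonoid N] (f : ℝ → N) (x : Fin k → ℝ) :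
    ∑ i, f (descSort x i) = ∑ i, f (x i) :=
  Equiv.sum_comp (Tuple.sort fun j => -x j) (fun i => f (x i))

theorem MajorizesFin.shannonH_le {x y : Fin k → ℝ} (hx : ∀ i, 0 ≤ x i) (hy : ∀ i, 0 ≤ y i)
    (h : MajorizesFin x y) : shannonH x ≤ shannonH y := by
  have key := sum_range_negMulLog_le (u := extendByZero (descSort x))
    (v := extendByZero (descSort y)) (k := k)
    (fun n hn => by rw [extendByZero, dif_pos hn]; exact hx _)
    (fun n hn => by rw [extendByZero, dif_pos hn]; exact hy _)
    (fun n hn m hm hnm => by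
      rw [extendByZero, extendByZero, dif_pos (Set.mem_Iio.1 hn), dif_pos (Set.mem_Iio.1 hm)]
      exact antitone_descSort y hnm)
    (fun l hl => by simpa only [sum_range_extendByZero _ hl] using h.1 l)
    (by simpa only [sum_range_comp_extendByZero (fun t : ℝ => t),
      sum_comp_descSort (fun t : ℝ => t)] using h.2)
  simpa only [shannonH_eq_sum_negMulLog, sum_range_comp_extendByZero, sum_comp_descSort] using key

end Majorization

theorem catalytic_majorization_entropy_bound_general (ε : ℝ)
    (d N : ℕ) (hd : 2 ≤ d) (hN : 2 ≤ N)
    (hsmall : ε / Real.log N ≤ 1 / 2)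
    (p q : Fin d → ℝ) (hp : IsProb p) (hq : IsProb q)
    (r : Fin N → ℝ) (hr : IsProb r)
    (s : Fin d × Fin N → ℝ) (hs : IsProb s)
    (hmaj : MajorizesFin
      (fun t : Fin (d * N) => p (finProdFinEquiv.symm t).1 * r (finProdFinEquiv.symm t).2)
      (fun t : Fin (d * N) => s (finProdFinEquiv.symm t)))
    (hclose : tvDist s (fun x : Fin d × Fin N => q x.1 * r x.2) ≤ ε / Real.log N) :
    shannonH p ≤ shannonH q + ε + ε * Real.log d / Real.log N + binEnt (ε / Real.log N) := by
  have hschur : shannonH p + shannonH r ≤ shannonH s := by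
    have := hmaj.shannonH_le (fun _ => mul_nonneg (hp.1 _) (hr.1 _)) (fun _ => hs.1 _)
    rwa [shannonH_comp_equiv finProdFinEquiv.symm (fun z => p z.1 * r z.2),
      shannonH_comp_equiv, shannonH_mul hp.2 hr.2] at this
  have hfannes := shannonH_le_add_tvDist hs (hq.mul hr)
  rw [shannonH_mul hq.2 hr.2, Fintype.card_prod, Fintype.card_fin, Fintype.card_fin, Nat.cast_mul,
    log_mul (Nat.cast_ne_zero.2 (by omega)) (Nat.cast_ne_zero.2 (by omega))] at hfannes
  have hlogN : 0 < log N := log_pos (by exact_mod_cast hN)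
  have hT := mul_le_mul_of_nonneg_right hclose (add_nonneg (log_natCast_nonneg d) hlogN.le)
  have hbin := binEnt_le_binEnt (tvDist_nonneg _ _) hclose hsmall
  have hδ : ε / log N * (log d + log N) = ε * log d / log N + ε := by field_simp
  linarith

/-- if `p ⊗ r` majorizes a state `s` which is `ε/log N`-close to
`q ⊗ r` in total variation, where the catalyst `r` has dimension `N`, then the
Shannon entropies satisfy
`H₁(p) ≤ H₁(q) + ε + ε·(log d)/(log N) + h(ε/log N)`. -/
theorem catalytic_majorization_entropy_bound (ε : ℝ) (hε : 0 ≤ ε)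
    (d N : ℕ) (hd : 2 ≤ d) (hN : 2 ≤ N)
    (hsmall : ε / Real.log N ≤ 1 / 2)
    (p q : Fin d → ℝ) (hp : IsProb p) (hq : IsProb q)
    (r : Fin N → ℝ) (hr : IsProb r)
    (s : Fin d × Fin N → ℝ) (hs : IsProb s)
    (hmaj : MajorizesFin
      (fun t : Fin (d * N) => p (finProdFinEquiv.symm t).1 * r (finProdFinEquiv.symm t).2)
      (fun t : Fin (d * N) => s (finProdFinEquiv.symm t)))
    (hclose : tvDist s (fun x : Fin d × Fin N => q x.1 * r x.2) ≤ ε / Real.log N) :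
    shannonH p ≤ shannonH q + ε + ε * Real.log d / Real.log N + binEnt (ε / Real.log N) :=
  catalytic_majorization_entropy_bound_general ε d N hd hN hsmall p q hp hq r hr s hs hmaj hclose

end
end

section
/- Let p be a probability distribution on Fin n, let 0 < α < 1, and let 0 < ε < 1. Then H_0(p) ≥ H_α(p), and there exists a subnormalized distribution p' obtained from p by setting some entries to zero, with ∑ i, (p i − p' i) ≤ ε (in particular ‖p − p'‖ ≤ ε), such that H_α(p) ≥ H_0(p') − (log(1/ε))/(1−α), where H_0(p') := log |{i : p' i > 0}|. -/
/-!
Put `A = ∑ i, p i ^ α`. Hölder's inequality on the support of `p` gives `A ≤ N ^ (1 - α)`,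
which is `H_α(p) ≤ H_0(p)`. For the smoothing, zero out every entry below the threshold `c`
defined by `c ^ (1 - α) * A = ε`. An entry `x < c` satisfies `x ≤ x ^ α * c ^ (1 - α)`, so the
removed mass is at most `c ^ (1 - α) * A = ε`; every surviving entry is at least `c`, so at most
`1 / c` survive, and `log (1 / c) = (log A + log (1 / ε)) / (1 - α)` is exactly the claimed bound.
-/

open scoped BigOperators ENNReal Classical

noncomputable section

/-- The Rényi entropy `H_α` for finite real `α` (with the separate formula at `α = 1`). -/
def renyiH {ι : Type*} [Fintype ι] (α : ℝ) (p : ι → ℝ) : ℝ :=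
  if α = 1 then - ∑ i, p i * Real.log (p i)
  else Real.sign α / (1 - α) * Real.log (∑ i, p i ^ α)

/-- `H_0`: logarithm of the number of nonzero components. -/
def H0 {ι : Type*} [Fintype ι] (p : ι → ℝ) : ℝ :=
  Real.log ((Finset.univ.filter (fun i => p i ≠ 0)).card)

open Finset Real

lemma self_le_rpow_mul_rpow_one_sub {x c α : ℝ} (hx : 0 ≤ x) (hxc : x ≤ c) (hα : α ≤ 1) :
    x ≤ x ^ α * c ^ (1 - α) := by
  rcases hx.eq_or_lt with rfl | hx
  · exact mul_nonneg (rpow_nonneg le_rfl α) (rpow_nonneg hxc _)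
  · calc x = x ^ α * x ^ (1 - α) := by rw [← rpow_add hx, add_sub_cancel, rpow_one]
      _ ≤ x ^ α * c ^ (1 - α) := by gcongr

lemma sum_rpow_le_card_rpow_mul_sum_rpow {ι : Type*} (s : Finset ι) {f : ι → ℝ}
    (hf : ∀ i, 0 ≤ f i) {α : ℝ} (hα0 : 0 < α) (hα1 : α ≤ 1) :
    ∑ i ∈ s, f i ^ α ≤ (#s : ℝ) ^ (1 - α) * (∑ i ∈ s, f i) ^ α := by
  have holder := inner_le_weight_mul_Lp_of_nonneg s (p := α⁻¹) (one_le_inv₀ hα0 |>.2 hα1)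
    (fun _ ↦ 1) (fun i ↦ f i ^ α) (fun _ ↦ zero_le_one) (fun i ↦ rpow_nonneg (hf i) α)
  simp_rw [one_mul, ← rpow_mul (hf _), mul_inv_cancel₀ hα0.ne', rpow_one, inv_inv, sum_const,
    nsmul_one] at holder
  exact holder

section
variable {ι : Type*} {p : ι → ℝ} {c α : ℝ}

def dropBelow (c : ℝ) (p : ι → ℝ) : ι → ℝ := fun i ↦ if c ≤ p i then p i else 0

lemma dropBelow_eq_or_eq_zero (c : ℝ) (p : ι → ℝ) (i : ι) :
    dropBelow c p i = p i ∨ dropBelow c p i = 0 :=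
  ite_eq_or_eq _ _ _

lemma dropBelow_le (hp : ∀ i, 0 ≤ p i) (i : ι) : dropBelow c p i ≤ p i := by
  unfold dropBelow
  split_ifs
  exacts [le_rfl, hp i]

variable [Fintype ι]

lemma IsProb.le_one (hp : IsProb p) (i : ι) : p i ≤ 1 :=
  hp.2 ▸ single_le_sum (fun j _ ↦ hp.1 j) (mem_univ i)

lemma IsProb.one_le_sum_rpow (hp : IsProb p) (hα : α ≤ 1) : 1 ≤ ∑ i, p i ^ α :=
  hp.2 ▸ sum_le_sum fun i _ ↦ self_le_rpow_of_le_one (hp.1 i) (hp.le_one i) hα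

lemma IsProb.sum_support_eq_one (hp : IsProb p) : ∑ i with p i ≠ 0, p i = 1 := by
  rw [sum_filter_ne_zero, hp.2]

lemma renyiH_eq_log_sum_rpow_div (hα0 : 0 < α) (hα1 : α ≠ 1) :
    renyiH α p = log (∑ i, p i ^ α) / (1 - α) := by
  rw [renyiH, if_neg hα1, sign_of_pos hα0]
  ring

lemma IsProb.sum_rpow_le_card_support_rpow (hp : IsProb p) (hα0 : 0 < α) (hα1 : α ≤ 1) :
    ∑ i, p i ^ α ≤ (#{i | p i ≠ 0} : ℝ) ^ (1 - α) := by
  have hsupport : ∑ i with p i ≠ 0, p i ^ α = ∑ i, p i ^ α :=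
    sum_filter_of_ne fun i _ hi h0 ↦ hi (by rw [h0, zero_rpow hα0.ne'])
  calc ∑ i, p i ^ α = ∑ i with p i ≠ 0, p i ^ α := hsupport.symm
    _ ≤ (#{i | p i ≠ 0} : ℝ) ^ (1 - α) * (∑ i with p i ≠ 0, p i) ^ α :=
      sum_rpow_le_card_rpow_mul_sum_rpow _ hp.1 hα0 hα1
    _ = (#{i | p i ≠ 0} : ℝ) ^ (1 - α) := by rw [hp.sum_support_eq_one, one_rpow, mul_one]

lemma IsProb.renyiH_le_H0 (hp : IsProb p) (hα0 : 0 < α) (hα1 : α < 1) :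
    renyiH α p ≤ H0 p := by
  have hcard : (0 : ℝ) < #{i | p i ≠ 0} := by
    exact_mod_cast card_pos.2 (nonempty_of_sum_ne_zero (hp.sum_support_eq_one ▸ one_ne_zero))
  have hlog : log (∑ i, p i ^ α) ≤ (1 - α) * H0 p := by
    rw [H0, ← log_rpow hcard]
    exact log_le_log (one_pos.trans_le (hp.one_le_sum_rpow hα1.le))
      (hp.sum_rpow_le_card_support_rpow hα0 hα1.le)
  rw [renyiH_eq_log_sum_rpow_div hα0 hα1.ne, div_le_iff₀ (sub_pos.2 hα1)]
  linarith

lemma tvDist_le_sum_sub_of_le {q : ι → ℝ} (h : ∀ i, q i ≤ p i) :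
    tvDist p q ≤ ∑ i, (p i - q i) := by
  have hnonneg : 0 ≤ ∑ i, (p i - q i) := sum_nonneg fun i _ ↦ sub_nonneg.2 (h i)
  rw [tvDist]
  simp_rw [abs_of_nonneg (sub_nonneg.2 (h _))]
  linarith

lemma sum_sub_dropBelow_le (hp : ∀ i, 0 ≤ p i) (hc : 0 ≤ c) (hα : α ≤ 1) :
    ∑ i, (p i - dropBelow c p i) ≤ c ^ (1 - α) * ∑ i, p i ^ α := by
  rw [mul_sum]
  refine sum_le_sum fun i _ ↦ ?_
  unfold dropBelow
  split_ifs with h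
  · rw [sub_self]
    exact mul_nonneg (rpow_nonneg hc _) (rpow_nonneg (hp i) α)
  · rw [sub_zero, mul_comm]
    exact self_le_rpow_mul_rpow_one_sub (hp i) (not_le.1 h).le hα

lemma IsProb.card_filter_ge_mul_le_one (hp : IsProb p) (c : ℝ) : (#{i | c ≤ p i} : ℝ) * c ≤ 1 :=
  calc (#{i | c ≤ p i} : ℝ) * c ≤ ∑ i with c ≤ p i, p i := by
        rw [← nsmul_eq_mul]
        exact card_nsmul_le_sum _ _ _ fun i hi ↦ (mem_filter.1 hi).2
    _ ≤ ∑ i, p i := sum_le_sum_of_subset_of_nonneg (subset_univ _) fun i _ _ ↦ hp.1 i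
    _ = 1 := hp.2

lemma IsProb.H0_dropBelow_le (hp : IsProb p) (hc0 : 0 < c) (hc1 : c ≤ 1) :
    H0 (dropBelow c p) ≤ -log c := by
  have hsupport : ({i | dropBelow c p i ≠ 0} : Finset ι) = ({i | c ≤ p i} : Finset ι) := by
    refine filter_congr fun i _ ↦ ?_
    unfold dropBelow
    split_ifs with h
    · simpa [h] using (hc0.trans_le h).ne'
    · simpa using h
  rw [H0, hsupport, ← log_inv]
  rcases (#{i | c ≤ p i}).eq_zero_or_pos with h0 | hpos
  · rw [h0, Nat.cast_zero, log_zero]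
    exact log_nonneg (one_le_inv₀ hc0 |>.2 hc1)
  · refine log_le_log (by exact_mod_cast hpos) ?_
    rw [← one_div, le_div_iff₀ hc0]
    exact hp.card_filter_ge_mul_le_one c

end

/-- `H_0(p) ≥ H_α(p)` for `0 < α < 1`, and there is a smoothing `p'`
of `p`, obtained by setting some entries to zero and with total mass removed at most
`ε`, such that `H_α(p) ≥ H_0(p') - log(1/ε)/(1-α)`. -/
theorem renyi_entropy_smoothing {n : ℕ} (p : Fin n → ℝ) (hp : IsProb p)
    (α ε : ℝ) (hα0 : 0 < α) (hα1 : α < 1) (hε0 : 0 < ε) (hε1 : ε < 1) :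
    renyiH α p ≤ H0 p ∧
    ∃ p' : Fin n → ℝ, (∀ i, p' i = p i ∨ p' i = 0) ∧
      (∑ i, (p i - p' i)) ≤ ε ∧ tvDist p p' ≤ ε ∧
      H0 p' - Real.log (1 / ε) / (1 - α) ≤ renyiH α p := by
  set A := ∑ i, p i ^ α
  have hA : 1 ≤ A := hp.one_le_sum_rpow hα1.le
  have hA0 : 0 < A := one_pos.trans_le hA
  have hεA : 0 < ε / A := div_pos hε0 hA0
  have h1α : 0 < 1 - α := sub_pos.2 hα1
  set c := (ε / A) ^ (1 - α)⁻¹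
  have hc0 : 0 < c := rpow_pos_of_pos hεA _
  have hc1 : c ≤ 1 :=
    rpow_le_one hεA.le ((div_le_one₀ hA0).2 (hε1.le.trans hA)) (inv_nonneg.2 h1α.le)
  have hcA : c ^ (1 - α) * A = ε := by
    rw [← rpow_mul hεA.le, inv_mul_cancel₀ h1α.ne', rpow_one, div_mul_cancel₀ _ hA0.ne']
  have hmass : ∑ i, (p i - dropBelow c p i) ≤ ε := hcA ▸ sum_sub_dropBelow_le hp.1 hc0.le hα1.le
  refine ⟨hp.renyiH_le_H0 hα0 hα1, dropBelow c p, dropBelow_eq_or_eq_zero c p, hmass,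
    (tvDist_le_sum_sub_of_le (dropBelow_le hp.1)).trans hmass, ?_⟩
  have hlogc : -log c = (log A - log ε) / (1 - α) := by
    rw [log_rpow hεA, log_div hε0.ne' hA0.ne']
    field_simp
    ring
  calc H0 (dropBelow c p) - log (1 / ε) / (1 - α) ≤ -log c - log (1 / ε) / (1 - α) := by
        gcongr
        exact hp.H0_dropBelow_le hc0 hc1
    _ = renyiH α p := by
      rw [renyiH_eq_log_sum_rpow_div hα0 hα1.ne, hlogc, one_div, log_inv]
      ring

end
end

section
/- Let p and q be probability distributions on Fin n with supp(p) ⊆ supp(q), let α > 1, and let 0 < ε < 1. Then there exists a subnormalized distribution p' with 0 ≤ p' i ≤ p i for all i and ∑ i, (p i − p' i) ≤ ε (in particular ‖p − p'‖ ≤ ε), such that D_α(p ‖ q) ≥ D_∞(p' ‖ q) − (log(1/ε))/(α−1), where D_∞(p' ‖ q) := log max_{i ∈ supp q} (p' i / q i). -/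
/-! Put `S = ∑ i, p i ^ α * q i ^ (1 - α)`, so that `D_α(p‖q) = log S / (α - 1)`, and cut `p` off
where the likelihood ratio `p / q` exceeds `c = (S / ε) ^ (1 / (α - 1))`. On that set
`p ≤ p (p / q) ^ (α - 1) / c ^ (α - 1) = p ^ α q ^ (1 - α) · ε / S`, so by this Markov-type bound
at most `ε` of mass is removed, while the truncated distribution has ratio at most `c` everywhere,
i.e. `D_∞(p'‖q) ≤ log c = (log S + log (1 / ε)) / (α - 1)`. -/

open scoped BigOperators ENNReal Classical

noncomputable section

open Finset

lemma elog_ofReal_of_pos {x : ℝ} (hx : 0 < x) : elog (ENNReal.ofReal x) = (Real.log x : EReal) := by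
  rw [elog, if_neg (ENNReal.ofReal_pos.mpr hx).ne', if_neg ENNReal.ofReal_ne_top,
    ENNReal.toReal_ofReal hx.le]

lemma ofReal_rpow_mul_ofReal_rpow_one_sub {a b α : ℝ} (hα : 0 < α) (ha : 0 ≤ a) (hb : 0 ≤ b)
    (hab : b = 0 → a = 0) :
    ENNReal.ofReal a ^ α * ENNReal.ofReal b ^ (1 - α) = ENNReal.ofReal (a ^ α * b ^ (1 - α)) := by
  rcases hb.eq_or_lt with rfl | hb
  · simp [hab rfl, Real.zero_rpow hα.ne', ENNReal.zero_rpow_of_pos hα]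
  · rw [ENNReal.ofReal_rpow_of_nonneg ha hα.le, ENNReal.ofReal_rpow_of_pos hb,
      ← ENNReal.ofReal_mul (Real.rpow_nonneg ha _)]

lemma rpow_mul_rpow_one_sub_eq_mul_div_rpow {a b α : ℝ} (ha : 0 < a) (hb : 0 < b) :
    a ^ α * b ^ (1 - α) = a * (a / b) ^ (α - 1) := by
  rw [Real.div_rpow ha.le hb.le, Real.rpow_sub_one ha.ne', show 1 - α = -(α - 1) by ring,
    Real.rpow_neg hb.le]
  field_simp

section Renyi

variable {ι : Type*} [Fintype ι] {p q : ι → ℝ} {α : ℝ}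

lemma renyiD_eq_log_div (hα0 : 0 < α) (hα1 : α ≠ 1) (hp : ∀ i, 0 ≤ p i) (hq : ∀ i, 0 ≤ q i)
    (hsupp : ∀ i, q i = 0 → p i = 0) (hS : 0 < ∑ i, p i ^ α * q i ^ (1 - α)) :
    renyiD α p q = ((Real.log (∑ i, p i ^ α * q i ^ (1 - α)) / (α - 1) : ℝ) : EReal) := by
  have hsum : ∑ i, ENNReal.ofReal (p i) ^ α * ENNReal.ofReal (q i) ^ (1 - α)
      = ENNReal.ofReal (∑ i, p i ^ α * q i ^ (1 - α)) := by
    rw [ENNReal.ofReal_sum_of_nonneg fun i _ =>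
      mul_nonneg (Real.rpow_nonneg (hp i) _) (Real.rpow_nonneg (hq i) _)]
    exact sum_congr rfl fun i _ =>
      ofReal_rpow_mul_ofReal_rpow_one_sub hα0 (hp i) (hq i) (hsupp i)
  rw [renyiD, if_neg hα0.ne', if_neg hα1, hsum, elog_ofReal_of_pos hS, Real.sign_of_pos hα0,
    ← EReal.coe_mul, one_div_mul_eq_div]

lemma IsProb.sum_rpow_mul_rpow_one_sub_pos (hp : IsProb p) (hq : ∀ i, 0 ≤ q i)
    (hsupp : ∀ i, q i = 0 → p i = 0) : 0 < ∑ i, p i ^ α * q i ^ (1 - α) := by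
  obtain ⟨i, -, hi⟩ := exists_lt_of_sum_lt (s := univ) (f := 0) (g := p)
    (by simp [hp.2])
  have hqi : 0 < q i := (hq i).lt_of_ne' fun h => hi.ne' (hsupp i h)
  exact sum_pos' (fun j _ => mul_nonneg (Real.rpow_nonneg (hp.1 j) _) (Real.rpow_nonneg (hq j) _))
    ⟨i, mem_univ i, mul_pos (Real.rpow_pos_of_pos hi _) (Real.rpow_pos_of_pos hqi _)⟩

end Renyi

section Truncation

variable {ι : Type*} {p q : ι → ℝ} {c α : ℝ}

def truncateAtRatio (c : ℝ) (p q : ι → ℝ) : ι → ℝ := fun i => if p i ≤ c * q i then p i else 0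

lemma truncateAtRatio_nonneg (hp : ∀ i, 0 ≤ p i) (i : ι) : 0 ≤ truncateAtRatio c p q i := by
  unfold truncateAtRatio; split_ifs
  exacts [hp i, le_rfl]

lemma truncateAtRatio_le (hp : ∀ i, 0 ≤ p i) (i : ι) : truncateAtRatio c p q i ≤ p i := by
  unfold truncateAtRatio; split_ifs
  exacts [le_rfl, hp i]

lemma truncateAtRatio_div_le (hc : 0 ≤ c) {i : ι} (hq : 0 < q i) :
    truncateAtRatio c p q i / q i ≤ c := by
  unfold truncateAtRatio; split_ifs with h
  · rwa [div_le_iff₀ hq]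
  · rwa [zero_div]

lemma sub_truncateAtRatio_le (hα : 1 ≤ α) (hc : 0 < c) {i : ι} (hp : 0 ≤ p i) (hq : 0 ≤ q i)
    (hsupp : q i = 0 → p i = 0) :
    p i - truncateAtRatio c p q i ≤ p i ^ α * q i ^ (1 - α) / c ^ (α - 1) := by
  unfold truncateAtRatio
  split_ifs with h
  · rw [sub_self]; positivity
  · rw [not_le] at h
    have hpi : 0 < p i := (mul_nonneg hc.le hq).trans_lt h
    have hqi : 0 < q i := hq.lt_of_ne' fun h0 => hpi.ne' (hsupp h0)
    have hratio : c ^ (α - 1) ≤ (p i / q i) ^ (α - 1) :=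
      Real.rpow_le_rpow hc.le ((lt_div_iff₀ hqi).mpr h).le (by linarith)
    rw [sub_zero, rpow_mul_rpow_one_sub_eq_mul_div_rpow hpi hqi, le_div_iff₀ (by positivity)]
    exact mul_le_mul_of_nonneg_left hratio hpi.le

lemma sum_sub_truncateAtRatio_le [Fintype ι] (hα : 1 ≤ α) (hc : 0 < c) (hp : ∀ i, 0 ≤ p i)
    (hq : ∀ i, 0 ≤ q i) (hsupp : ∀ i, q i = 0 → p i = 0) :
    ∑ i, (p i - truncateAtRatio c p q i) ≤ (∑ i, p i ^ α * q i ^ (1 - α)) / c ^ (α - 1) := by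
  rw [sum_div]
  exact sum_le_sum fun i _ => sub_truncateAtRatio_le hα hc (hp i) (hq i) (hsupp i)

end Truncation

lemma log_sSup_ratio_le_log {ι : Type*} [Fintype ι] {r q : ι → ℝ} {c : ℝ} (hq : ∀ i, 0 ≤ q i)
    (hsupp : ∀ i, q i = 0 → r i = 0) (hr : 0 < ∑ i, r i) (hle : ∀ i, 0 < q i → r i / q i ≤ c) :
    Real.log (sSup {x : ℝ | ∃ i, q i ≠ 0 ∧ x = r i / q i}) ≤ Real.log c := by
  set T := {x : ℝ | ∃ i, q i ≠ 0 ∧ x = r i / q i}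
  obtain ⟨i, -, hi⟩ := exists_lt_of_sum_lt (s := univ) (f := 0) (g := r) (by simpa using hr)
  have hqi : 0 < q i := (hq i).lt_of_ne' fun h => hi.ne' (hsupp i h)
  have hbdd : BddAbove T :=
    ((Set.finite_range fun j => r j / q j).subset (by rintro _ ⟨j, -, rfl⟩; exact ⟨j, rfl⟩)).bddAbove
  have hpos : 0 < sSup T := (div_pos hi hqi).trans_le (le_csSup hbdd ⟨i, hqi.ne', rfl⟩)
  refine Real.log_le_log hpos (csSup_le ⟨_, i, hqi.ne', rfl⟩ ?_)
  rintro _ ⟨j, hqj, rfl⟩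
  exact hle j ((hq j).lt_of_ne' hqj)

lemma tvDist_eq_half_sum_sub {ι : Type*} [Fintype ι] {p r : ι → ℝ} (h : ∀ i, r i ≤ p i) :
    tvDist p r = (1 / 2) * ∑ i, (p i - r i) := by
  unfold tvDist
  congr 1
  exact sum_congr rfl fun i _ => abs_of_nonneg (sub_nonneg.mpr (h i))

/-- smoothing towards `D_∞`. For `supp p ⊆ supp q`, `α > 1` and
`0 < ε < 1`, there is a subnormalized `p'` with `0 ≤ p' ≤ p` and total mass removed
at most `ε` such that `D_α(p‖q) ≥ D_∞(p'‖q) - log(1/ε)/(α-1)`, where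
`D_∞(p'‖q) = log max_{i ∈ supp q} (p' i / q i)`. -/
theorem renyiD_smoothing_to_Dmax {n : ℕ} (p q : Fin n → ℝ)
    (hp : IsProb p) (hq : IsProb q)
    (hsupp : ∀ i, q i = 0 → p i = 0)
    (α : ℝ) (hα : 1 < α) (ε : ℝ) (hε0 : 0 < ε) (hε1 : ε < 1) :
    ∃ p' : Fin n → ℝ, (∀ i, 0 ≤ p' i) ∧ (∀ i, p' i ≤ p i) ∧
      (∑ i, (p i - p' i)) ≤ ε ∧ tvDist p p' ≤ ε ∧
      ((Real.log (sSup {x : ℝ | ∃ i, q i ≠ 0 ∧ x = p' i / q i})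
          - Real.log (1 / ε) / (α - 1) : ℝ) : EReal) ≤ renyiD α p q := by
  set S := ∑ i, p i ^ α * q i ^ (1 - α)
  have hS : 0 < S := hp.sum_rpow_mul_rpow_one_sub_pos hq.1 hsupp
  have hα1 : 0 < α - 1 := sub_pos.mpr hα
  set c := (S / ε) ^ (α - 1)⁻¹
  have hc : 0 < c := by positivity
  have hc_pow : c ^ (α - 1) = S / ε := by
    rw [← Real.rpow_mul (by positivity), inv_mul_cancel₀ hα1.ne', Real.rpow_one]
  have hle : ∀ i, truncateAtRatio c p q i ≤ p i := truncateAtRatio_le hp.1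
  have hmass : ∑ i, (p i - truncateAtRatio c p q i) ≤ ε := by
    have := sum_sub_truncateAtRatio_le hα.le hc hp.1 hq.1 hsupp
    rwa [hc_pow, div_div_cancel₀ hS.ne'] at this
  refine ⟨truncateAtRatio c p q, truncateAtRatio_nonneg hp.1, hle, hmass, ?_, ?_⟩
  · rw [tvDist_eq_half_sum_sub hle]
    linarith
  have hDmax := log_sSup_ratio_le_log hq.1
    (fun i hqi => le_antisymm (hsupp i hqi ▸ hle i) (truncateAtRatio_nonneg hp.1 i))
    -- `ε < 1` leaves positive mass, so the supremum is positive and not sent to `log 0 = 0`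
    (by simp only [sum_sub_distrib, hp.2] at hmass; linarith)
    (fun i => truncateAtRatio_div_le hc.le)
  have hlog_c : Real.log c = Real.log S / (α - 1) + Real.log (1 / ε) / (α - 1) := by
    rw [Real.log_rpow (by positivity), Real.log_div hS.ne' hε0.ne', one_div, Real.log_inv]
    ring
  rw [renyiD_eq_log_div (by linarith) hα.ne' hp.1 hq.1 hsupp hS, EReal.coe_le_coe_iff, sub_le_iff_le_add]
  exact hDmax.trans hlog_c.le

end
end

section
/- Let p and q be probability distributions on Fin n, let 0 < α < 1, and let 0 < ε < 1. Then there exists a subnormalized distribution p' obtained from p by setting some entries to zero, with ∑ i, (p i − p' i) ≤ ε (in particular ‖p − p'‖ ≤ ε), such that D_α(p ‖ q) ≤ D_0(p' ‖ q) + (log(1/ε))/(1−α), where D_0(p' ‖ q) := −log ∑_{i : p' i > 0} q i. -/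
open scoped BigOperators ENNReal Classical

noncomputable section

/-- smoothing towards `D_0`. For `0 < α < 1` and `0 < ε < 1`, there
is a smoothing `p'` of `p`, obtained by setting some entries to zero and with total
mass removed at most `ε`, such that `D_α(p‖q) ≤ D_0(p'‖q) + log(1/ε)/(1-α)`, where
`D_0(p'‖q) = -log ∑_{i : p' i ≠ 0} q i` is extended-real valued. -/
theorem renyiD_smoothing_to_Dmin {n : ℕ} (p q : Fin n → ℝ)
    (hp : IsProb p) (hq : IsProb q)
    (α : ℝ) (hα0 : 0 < α) (hα1 : α < 1) (ε : ℝ) (hε0 : 0 < ε) (hε1 : ε < 1) :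
    ∃ p' : Fin n → ℝ, (∀ i, p' i = p i ∨ p' i = 0) ∧
      (∑ i, (p i - p' i)) ≤ ε ∧ tvDist p p' ≤ ε ∧
      renyiD α p q ≤
        (- elog (ENNReal.ofReal (∑ i ∈ Finset.univ.filter (fun i => p' i ≠ 0), q i)))
          + ((Real.log (1 / ε) / (1 - α) : ℝ) : EReal) := by
  obtain ⟨hpn, hps⟩ := hp
  obtain ⟨hqn, hqs⟩ := hq
  have hβ : (0:ℝ) < 1 - α := by linarith
  set S : ℝ := ∑ i, p i ^ α * q i ^ (1 - α) with hSdef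
  have hterm : ∀ i, 0 ≤ p i ^ α * q i ^ (1 - α) := fun i =>
    mul_nonneg (Real.rpow_nonneg (hpn i) _) (Real.rpow_nonneg (hqn i) _)
  have hS0 : 0 ≤ S := Finset.sum_nonneg fun i _ => hterm i
  have hsplit : ∀ x : ℝ, 0 ≤ x → x ^ α * x ^ (1 - α) = x := by
    intro x hx
    rw [← Real.rpow_add' hx (by norm_num)]
    norm_num
  rcases eq_or_lt_of_le hS0 with hS | hS
  · -- S = 0 : take p' = p
    refine ⟨p, fun i => Or.inl rfl, by simp [hε0.le], by simp [tvDist, hε0.le], ?_⟩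
    have hQ : ∑ i ∈ Finset.univ.filter (fun i => p i ≠ 0), q i = 0 := by
      apply Finset.sum_eq_zero
      intro i hi
      rw [Finset.mem_filter] at hi
      have hpi : 0 < p i := lt_of_le_of_ne (hpn i) (Ne.symm hi.2)
      have hz : p i ^ α * q i ^ (1 - α) = 0 :=
        (Finset.sum_eq_zero_iff_of_nonneg (fun i _ => hterm i)).mp hS.symm i (Finset.mem_univ i)
      have hpa : 0 < p i ^ α := Real.rpow_pos_of_pos hpi _
      by_contra hqi
      have hqpos : 0 < q i := lt_of_le_of_ne (hqn i) (Ne.symm hqi)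
      have : 0 < p i ^ α * q i ^ (1 - α) := mul_pos hpa (Real.rpow_pos_of_pos hqpos _)
      linarith [this, hz.le]
    rw [hQ]
    simp only [ENNReal.ofReal_zero, elog, if_pos rfl, EReal.neg_bot, EReal.top_add_coe]
    exact le_top
  · -- S > 0
    set t : ℝ := (S / ε) ^ (1 - α)⁻¹ with htdef
    have ht0 : 0 ≤ t := Real.rpow_nonneg (by positivity) _
    have htβ : t ^ (1 - α) = S / ε := by
      rw [htdef, ← Real.rpow_mul (by positivity), inv_mul_cancel₀ hβ.ne', Real.rpow_one]
    set p' : Fin n → ℝ := fun i => if ε * q i ^ (1 - α) < S * p i ^ (1 - α) then p i else 0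
      with hp'def
    have hcase : ∀ i, p' i = p i ∨ p' i = 0 := by
      intro i; by_cases h : ε * q i ^ (1 - α) < S * p i ^ (1 - α)
      · exact Or.inl (by simp [hp'def, h])
      · exact Or.inr (by simp [hp'def, h])
    have hp'le : ∀ i, 0 ≤ p i - p' i := by
      intro i; rcases hcase i with h | h <;> rw [h] <;> simp [hpn i]
    -- removed mass
    have hM : ∑ i, (p i - p' i) ≤ ε := by
      have key : ∀ i, S * (p i - p' i) ≤ ε * (p i ^ α * q i ^ (1 - α)) := by
        intro i
        by_cases h : ε * q i ^ (1 - α) < S * p i ^ (1 - α)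
        · simp only [hp'def, if_pos h]
          simpa using mul_nonneg hε0.le (hterm i)
        · simp only [hp'def, if_neg h, sub_zero]
          push_neg at h
          calc S * p i = (S * p i ^ (1 - α)) * p i ^ α := by
                rw [mul_assoc, mul_comm (p i ^ (1-α)), hsplit _ (hpn i)]
            _ ≤ (ε * q i ^ (1 - α)) * p i ^ α :=
                mul_le_mul_of_nonneg_right h (Real.rpow_nonneg (hpn i) _)
            _ = ε * (p i ^ α * q i ^ (1 - α)) := by ring
      have : S * ∑ i, (p i - p' i) ≤ ε * S := by
        rw [Finset.mul_sum]
        calc ∑ i, S * (p i - p' i) ≤ ∑ i, ε * (p i ^ α * q i ^ (1 - α)) :=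
              Finset.sum_le_sum fun i _ => key i
          _ = ε * S := by rw [← Finset.mul_sum]
      have := this.trans_eq (mul_comm ε S)
      exact le_of_mul_le_mul_left this hS
    have hM0 : 0 ≤ ∑ i, (p i - p' i) := Finset.sum_nonneg fun i _ => hp'le i
    have hTV : tvDist p p' ≤ ε := by
      have : ∑ i, |p i - p' i| = ∑ i, (p i - p' i) :=
        Finset.sum_congr rfl fun i _ => abs_of_nonneg (hp'le i)
      rw [tvDist, this]; linarith
    refine ⟨p', hcase, hM, hTV, ?_⟩
    -- support sum
    set Q : ℝ := ∑ i ∈ Finset.univ.filter (fun i => p' i ≠ 0), q i with hQdef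
    have hQ0 : 0 ≤ Q := Finset.sum_nonneg fun i _ => hqn i
    -- bound Q ≤ t
    have hQt : Q ≤ t := by
      have hqt : ∀ i ∈ Finset.univ.filter (fun i => p' i ≠ 0), q i ≤ t * p i := by
        intro i hi
        rw [Finset.mem_filter] at hi
        have hc : ε * q i ^ (1 - α) < S * p i ^ (1 - α) := by
          by_contra h
          exact hi.2 (by simp [hp'def, h])
        by_contra hgt
        push_neg at hgt
        have h1 : (t * p i) ^ (1 - α) ≤ q i ^ (1 - α) :=
          Real.rpow_le_rpow (mul_nonneg ht0 (hpn i)) hgt.le hβ.le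
        rw [Real.mul_rpow ht0 (hpn i), htβ] at h1
        have h2 : ε * (S / ε * p i ^ (1 - α)) ≤ ε * q i ^ (1 - α) :=
          mul_le_mul_of_nonneg_left h1 hε0.le
        rw [← mul_assoc, mul_div_cancel₀ S hε0.ne'] at h2
        linarith
      calc Q ≤ ∑ i ∈ Finset.univ.filter (fun i => p' i ≠ 0), t * p i :=
            Finset.sum_le_sum hqt
        _ ≤ ∑ i, t * p i := Finset.sum_le_sum_of_subset_of_nonneg
            (Finset.filter_subset _ _) (fun i _ _ => mul_nonneg ht0 (hpn i))
        _ = t := by rw [← Finset.mul_sum, hps, mul_one]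
    -- rewrite LHS of the goal
    have hT : (∑ i, (ENNReal.ofReal (p i)) ^ α * (ENNReal.ofReal (q i)) ^ (1 - α))
        = ENNReal.ofReal S := by
      rw [hSdef, ENNReal.ofReal_sum_of_nonneg fun i _ => hterm i]
      refine Finset.sum_congr rfl fun i _ => ?_
      rw [ENNReal.ofReal_mul (Real.rpow_nonneg (hpn i) _),
        ENNReal.ofReal_rpow_of_nonneg (hpn i) hα0.le,
        ENNReal.ofReal_rpow_of_nonneg (hqn i) hβ.le]
    have hL : renyiD α p q = (((1 / (α - 1)) * Real.log S : ℝ) : EReal) := by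
      rw [renyiD, if_neg hα0.ne', if_neg hα1.ne, Real.sign_of_pos hα0, hT]
      rw [elog, if_neg (by simp [ENNReal.ofReal_eq_zero]; linarith), if_neg ENNReal.ofReal_ne_top,
        ENNReal.toReal_ofReal hS0, ← EReal.coe_mul]
    rw [hL]
    rcases eq_or_lt_of_le hQ0 with hQ | hQ
    · rw [← hQ]
      simp only [ENNReal.ofReal_zero, elog, if_pos rfl, EReal.neg_bot, EReal.top_add_coe]
      exact le_top
    · have hR : (- elog (ENNReal.ofReal Q)) + ((Real.log (1 / ε) / (1 - α) : ℝ) : EReal)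
          = (((-Real.log Q) + Real.log (1 / ε) / (1 - α) : ℝ) : EReal) := by
        rw [elog, if_neg (by simp [ENNReal.ofReal_eq_zero]; linarith), if_neg ENNReal.ofReal_ne_top,
          ENNReal.toReal_ofReal hQ0, ← EReal.coe_neg, ← EReal.coe_add]
      rw [hR]
      rw [EReal.coe_le_coe_iff]
      -- real inequality
      have hεQ : ε * Q ^ (1 - α) ≤ S := by
        have h1 : Q ^ (1 - α) ≤ t ^ (1 - α) := Real.rpow_le_rpow hQ0 hQt hβ.le
        rw [htβ] at h1
        have := mul_le_mul_of_nonneg_left h1 hε0.le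
        rwa [mul_div_cancel₀ S hε0.ne'] at this
      have hlog : Real.log ε + (1 - α) * Real.log Q ≤ Real.log S := by
        have h1 : Real.log (ε * Q ^ (1 - α)) ≤ Real.log S :=
          Real.log_le_log (by positivity) hεQ
        rwa [Real.log_mul hε0.ne' (by positivity), Real.log_rpow hQ] at h1
      rw [one_div_mul_eq_div, div_le_iff_of_neg (show α - 1 < 0 by linarith)]
      have e2 : Real.log (1 / ε) = -Real.log ε := by rw [one_div, Real.log_inv]
      rw [e2]
      have e3 : (-Real.log Q + -Real.log ε / (1 - α)) * (α - 1)
          = (1 - α) * Real.log Q + Real.log ε := by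
        field_simp
        ring
      rw [e3]
      linarith

end
end

section
/- Let p be a full-rank probability distribution on Fin n. Then for all real α', α with α' ≤ α < 0, one has H_{α'}(p) ≤ H_α(p); that is, the Rényi entropy H_α(p) = (−1/(1−α)) · log(∑ i, (p i)^α) is monotonically nondecreasing in α on (−∞, 0). -/
open scoped BigOperators ENNReal Classical

noncomputable section

/-- for a full-rank distribution the Rényi entropy is monotonically
nondecreasing in `α` on `(-∞, 0)`. -/
theorem renyiH_monotone_on_negatives {n : ℕ} (p : Fin n → ℝ)
    (hp : IsProb p) (hfull : ∀ i, 0 < p i)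
    (α' α : ℝ) (h : α' ≤ α) (hneg : α < 0) :
    renyiH α' p ≤ renyiH α p := by
  have hneg' : α' < 0 := lt_of_le_of_lt h hneg
  have hα1 : α ≠ 1 := by linarith
  have hα'1 : α' ≠ 1 := by linarith
  have ht : α - 1 < 0 := by linarith
  have ht' : α' - 1 < 0 := by linarith
  have ht'ne : α' - 1 ≠ 0 := ne_of_lt ht'
  have htne : α - 1 ≠ 0 := ne_of_lt ht
  -- nonempty index set
  have hne : Nonempty (Fin n) := by
    by_contra hc
    have : (∑ i, p i) = 0 := by
      rw [Finset.sum_eq_zero]; intro i _; exact absurd ⟨i⟩ hc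
    rw [hp.2] at this; norm_num at this
  -- positivity of the sums
  have hS : 0 < ∑ i, p i ^ α :=
    Finset.sum_pos (fun i _ => Real.rpow_pos_of_pos (hfull i) α) Finset.univ_nonempty
  have hS' : 0 < ∑ i, p i ^ α' :=
    Finset.sum_pos (fun i _ => Real.rpow_pos_of_pos (hfull i) α') Finset.univ_nonempty
  -- the exponent q = (α'-1)/(α-1) ≥ 1
  set q : ℝ := (α' - 1) / (α - 1) with hq
  have hq1 : 1 ≤ q := by
    rw [hq, le_div_iff_of_neg ht]; linarith
  have hq0 : 0 < q := lt_of_lt_of_le one_pos hq1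
  -- key inequality via power mean (Jensen)
  have key : ∑ i, p i ^ α ≤ (∑ i, p i ^ α') ^ (1 / q) := by
    have hmain := Real.arith_mean_le_rpow_mean Finset.univ p (fun i => p i ^ (α - 1))
      (fun i _ => (hfull i).le) hp.2
      (fun i _ => (Real.rpow_pos_of_pos (hfull i) _).le) hq1
    have e1 : ∀ i : Fin n, p i * p i ^ (α - 1) = p i ^ α := by
      intro i
      conv_rhs => rw [show α = 1 + (α - 1) by ring, Real.rpow_add (hfull i), Real.rpow_one]
    have e2 : ∀ i : Fin n, p i * (p i ^ (α - 1)) ^ q = p i ^ α' := by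
      intro i
      rw [← Real.rpow_mul (hfull i).le]
      have : (α - 1) * q = α' - 1 := by
        rw [hq]; field_simp
      rw [this]
      conv_rhs => rw [show α' = 1 + (α' - 1) by ring, Real.rpow_add (hfull i), Real.rpow_one]
    simp only [e1, e2] at hmain
    exact hmain
  -- take logs
  have hlog : Real.log (∑ i, p i ^ α) ≤ (1 / q) * Real.log (∑ i, p i ^ α') := by
    calc Real.log (∑ i, p i ^ α) ≤ Real.log ((∑ i, p i ^ α') ^ (1 / q)) :=
          Real.log_le_log hS key
      _ = (1 / q) * Real.log (∑ i, p i ^ α') := Real.log_rpow hS' _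
  -- unfold renyiH
  rw [renyiH, renyiH, if_neg hα1, if_neg hα'1, Real.sign_of_neg hneg, Real.sign_of_neg hneg']
  have hrw : ∀ β : ℝ, (-1 : ℝ) / (1 - β) = 1 / (β - 1) := by
    intro β
    have e : (1 : ℝ) - β = -(β - 1) := by ring
    rw [e, div_neg, neg_div, neg_neg]
  rw [hrw α, hrw α']
  rw [div_mul_eq_mul_div, div_mul_eq_mul_div, one_mul, one_mul]
  have e : ∀ a b : ℝ, a / b = (-a) / (-b) := fun a b => (neg_div_neg_eq a b).symm
  rw [e _ (α' - 1), e _ (α - 1), div_le_div_iff₀ (by linarith) (by linarith)]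
  have h2 := mul_le_mul_of_nonpos_right hlog (le_of_lt ht')
  have h3 : (1 / q * Real.log (∑ i, p i ^ α')) * (α' - 1)
      = Real.log (∑ i, p i ^ α') * (α - 1) := by
    rw [hq]; field_simp
  nlinarith [h2, h3]
end
end

section
/- For n ≥ 1 define the embezzling distribution μ_n on Fin n by μ_n(j) := 1/(j·C(n)) for j = 1, …, n, where C(n) := ∑_{j=1}^n 1/j. Then for every m ≥ 1 and every ε > 0 there exists n₀ such that for all n ≥ n₀ and every probability distribution p on Fin m the following holds: let w be the decreasing rearrangement of the n·m values μ_n(j)·p(i) of μ_n ⊗ p, and let ν be the length-(n·m) vector whose first n entries are μ_n(1), …, μ_n(n) and whose remaining entries are 0 (the decreasing rearrangement of μ_n ⊗ e₀, where e₀ is a deterministic distribution on Fin m). Then the fidelity satisfies ∑_{j=1}^{n·m} √(w_j · ν_j) ≥ 1 − ε; in particular the total variation distance between w and ν tends to 0 as n → ∞, uniformly over p. -/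
open scoped BigOperators ENNReal Classical

noncomputable section

/-- The harmonic number `C(n) = ∑_{j=1}^n 1/j`. -/
def harm (n : ℕ) : ℝ := ∑ j ∈ Finset.range n, 1 / ((j : ℝ) + 1)

/-- The embezzling distribution `μ_n(j) = 1/(j·C(n))`, `j = 1, …, n`. -/
def embez (n : ℕ) : Fin n → ℝ := fun j => 1 / ((((j : ℕ) : ℝ) + 1) * harm n)

/-- The decreasing rearrangement of `μ_n ⊗ p`, as a vector on `Fin (n·m)`. -/
def embezW (n m : ℕ) (p : Fin m → ℝ) : Fin (n * m) → ℝ :=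
  descSort (fun u : Fin (n * m) =>
    embez n (finProdFinEquiv.symm u).1 * p (finProdFinEquiv.symm u).2)

/-- The vector of length `n·m` whose first `n` entries are `μ_n(1), …, μ_n(n)` and
whose remaining entries are `0` (the decreasing rearrangement of `μ_n ⊗ e₀`). -/
def embezNu (n m : ℕ) : Fin (n * m) → ℝ :=
  fun t => if h : (t : ℕ) < n then embez n ⟨(t : ℕ), h⟩ else 0

/-! ### Auxiliary lemmas -/

lemma harm_pos {n : ℕ} (hn : 1 ≤ n) : 0 < harm n := by
  apply Finset.sum_pos (fun j _ => by positivity)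
  exact Finset.nonempty_range_iff.mpr (by omega)

lemma harm_mono : Monotone harm := by
  intro a b hab
  apply Finset.sum_le_sum_of_subset_of_nonneg (Finset.range_subset_range.mpr hab)
  intro j _ _
  positivity

lemma descSort_antitone {k : ℕ} (x : Fin k → ℝ) : Antitone (descSort x) := by
  intro a b hab
  have h := Tuple.monotone_sort (fun j => - x j) hab
  simp only [Function.comp_apply] at h
  simpa [descSort] using neg_le_neg_iff.mp h

lemma descSort_nonneg {k : ℕ} {x : Fin k → ℝ} (hx : ∀ i, 0 ≤ x i) (i : Fin k) :
    0 ≤ descSort x i := hx _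

lemma sum_descSort {k : ℕ} (x : Fin k → ℝ) : ∑ i, descSort x i = ∑ i, x i :=
  Equiv.sum_comp (Tuple.sort (fun j => - x j)) x

lemma card_filter_descSort {k : ℕ} (x : Fin k → ℝ) (c : ℝ) :
    (Finset.univ.filter fun i => c ≤ descSort x i).card
      = (Finset.univ.filter fun i => c ≤ x i).card := by
  apply Finset.card_bij (fun i _ => Tuple.sort (fun j => - x j) i)
  · intro a ha
    simp only [Finset.mem_filter, Finset.mem_univ, true_and] at ha ⊢
    exact ha
  · intro a _ b _ h
    exact (Tuple.sort (fun j => - x j)).injective h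
  · intro b hb
    refine ⟨(Tuple.sort (fun j => - x j)).symm b, ?_, by simp⟩
    simp only [Finset.mem_filter, Finset.mem_univ, true_and] at hb ⊢
    simpa [descSort] using hb

lemma descSort_ge {k : ℕ} (x : Fin k → ℝ) (c : ℝ) {s : ℕ} (hs : s < k)
    (hcard : s + 1 ≤ (Finset.univ.filter fun i => c ≤ x i).card) :
    c ≤ descSort x ⟨s, hs⟩ := by
  by_contra h
  push_neg at h
  have hsub : (Finset.univ.filter fun i => c ≤ descSort x i)
      ⊆ Finset.univ.filter fun i : Fin k => (i : ℕ) < s := by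
    intro i hi
    simp only [Finset.mem_filter, Finset.mem_univ, true_and] at hi ⊢
    by_contra hlt
    push_neg at hlt
    have : descSort x i ≤ descSort x ⟨s, hs⟩ := descSort_antitone x (by exact hlt)
    linarith
  have h1 : (Finset.univ.filter fun i : Fin k => (i : ℕ) < s).card ≤ s := by
    calc (Finset.univ.filter fun i : Fin k => (i : ℕ) < s).card
        ≤ (Finset.range s).card := Finset.card_le_card_of_injOn (fun i : Fin k => (i : ℕ))
          (fun a ha => Finset.mem_range.mpr (Finset.mem_filter.mp ha).2)
          (fun a _ b _ hab => Fin.ext hab)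
      _ = s := Finset.card_range s
  have := (Finset.card_le_card hsub).trans h1
  rw [card_filter_descSort] at this
  omega

lemma card_filter_val_lt {n c : ℕ} (hc : c ≤ n) :
    (Finset.univ.filter fun a : Fin n => (a : ℕ) < c).card = c := by
  have key : (Finset.univ.filter fun a : Fin n => (a : ℕ) < c).card = (Finset.range c).card := by
    apply Finset.card_bij (fun (a : Fin n) _ => (a : ℕ))
    · intro a ha
      exact Finset.mem_range.mpr (Finset.mem_filter.mp ha).2
    · intro a _ b _ hab
      exact Fin.ext hab
    · intro j hj
      have hjn : j < n := lt_of_lt_of_le (Finset.mem_range.mp hj) hc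
      exact ⟨⟨j, hjn⟩, Finset.mem_filter.mpr ⟨Finset.mem_univ _, Finset.mem_range.mp hj⟩, rfl⟩
  rw [key, Finset.card_range]

lemma prob_le_one {m : ℕ} {p : Fin m → ℝ} (hp : IsProb p) (b : Fin m) : p b ≤ 1 := by
  rw [← hp.2]
  exact Finset.single_le_sum (fun i _ => hp.1 i) (Finset.mem_univ b)

lemma count_ge {n m : ℕ} (hm : 1 ≤ m) (hn : 1 ≤ n) {p : Fin m → ℝ} (hp : IsProb p)
    {s : ℕ} (hK : s + 1 + m ≤ n) :
    s + 1 ≤ (Finset.univ.filter fun q : Fin n × Fin m =>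
      1 / (((s : ℝ) + 1 + (m : ℝ)) * harm n) ≤ embez n q.1 * p q.2).card := by
  have hH : 0 < harm n := harm_pos hn
  set K : ℝ := (s : ℝ) + 1 + (m : ℝ) with hKdef
  have hK0 : (0:ℝ) < K := by positivity
  set f : Fin m → ℕ := fun b => ⌊p b * K⌋₊ with hf
  have hfn : ∀ b, f b ≤ n := by
    intro b
    have h1 : p b * K ≤ K := by nlinarith [prob_le_one hp b, hp.1 b]
    have h2 : ⌊p b * K⌋₊ ≤ ⌊K⌋₊ := Nat.floor_le_floor h1
    have h3 : ⌊K⌋₊ ≤ n := by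
      have : K ≤ (n : ℝ) := by
        rw [hKdef]; exact_mod_cast (by exact_mod_cast hK : ((s+1+m : ℕ):ℝ) ≤ (n:ℝ))
      calc ⌊K⌋₊ ≤ ⌊(n:ℝ)⌋₊ := Nat.floor_le_floor this
        _ = n := Nat.floor_natCast n
    exact h2.trans h3
  have hcond : ∀ q : Fin n × Fin m,
      (1 / (K * harm n) ≤ embez n q.1 * p q.2 ↔ (q.1 : ℕ) < f q.2) := by
    rintro ⟨a, b⟩
    have hpb : 0 ≤ p b := hp.1 b
    have ha1 : (0:ℝ) < (a:ℝ) + 1 := by positivity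
    have step1 : 1 / (K * harm n) ≤ embez n a * p b ↔ ((a:ℝ) + 1) ≤ p b * K := by
      rw [embez, show (1:ℝ)/(((a:ℝ)+1)*harm n) * p b = p b / (((a:ℝ)+1)*harm n) by ring,
        div_le_div_iff₀ (by positivity) (by positivity)]
      constructor
      · intro h
        have h' : ((a:ℝ)+1) * harm n ≤ (p b * K) * harm n := by nlinarith
        exact le_of_mul_le_mul_right h' hH
      · intro h
        nlinarith
    rw [step1]
    rw [show ((a:ℝ) + 1) = ((((a:ℕ) + 1 : ℕ)):ℝ) by push_cast; ring]
    rw [← Nat.le_floor_iff (by positivity)]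
    simp only [hf]
    omega
  have hcard : (Finset.univ.filter fun q : Fin n × Fin m =>
      1 / (K * harm n) ≤ embez n q.1 * p q.2).card = ∑ b : Fin m, f b := by
    rw [Finset.card_filter]
    rw [Fintype.sum_prod_type]
    rw [Finset.sum_comm]
    have : ∀ b : Fin m, (∑ a : Fin n, if 1 / (K * harm n) ≤ embez n a * p b then 1 else 0) = f b := by
      intro b
      have : (∑ a : Fin n, if 1 / (K * harm n) ≤ embez n a * p b then 1 else 0)
          = (Finset.univ.filter fun a : Fin n => (a : ℕ) < f b).card := by
        rw [Finset.card_filter]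
        apply Finset.sum_congr rfl
        intro a _
        simp only [hcond ⟨a, b⟩]
      rw [this, card_filter_val_lt (hfn b)]
    simp only [this]
  rw [hcard]
  have hreal : ((s:ℝ) + 1) < ∑ b : Fin m, (f b : ℝ) := by
    have hlt : ∀ b : Fin m, p b * K - 1 < (f b : ℝ) := fun b => Nat.sub_one_lt_floor _
    have hsum : ∑ b : Fin m, (p b * K - 1) = K - m := by
      rw [Finset.sum_sub_distrib, ← Finset.sum_mul, hp.2]
      simp
    have : ∑ b : Fin m, (p b * K - 1) < ∑ b : Fin m, (f b : ℝ) :=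
      Finset.sum_lt_sum_of_nonempty (Finset.univ_nonempty_iff.mpr ⟨⟨0, by omega⟩⟩)
        (fun b _ => hlt b)
    rw [hsum] at this
    rw [hKdef] at this
    linarith
  have : ((s:ℝ) + 1) < ((∑ b : Fin m, f b : ℕ) : ℝ) := by push_cast; exact_mod_cast hreal
  exact_mod_cast le_of_lt (by exact_mod_cast this : ((s + 1 : ℕ):ℝ) < ((∑ b : Fin m, f b : ℕ):ℝ))

lemma sum_embez {n : ℕ} (hn : 1 ≤ n) : ∑ a : Fin n, embez n a = 1 := by
  have hH : 0 < harm n := harm_pos hn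
  have h1 : ∑ a : Fin n, embez n a = ∑ j ∈ Finset.range n, 1/(((j:ℝ)+1) * harm n) :=
    Fin.sum_univ_eq_sum_range (fun j => 1/(((j:ℝ)+1) * harm n)) n
  have h2 : ∀ j ∈ Finset.range n, 1/(((j:ℝ)+1) * harm n) = (1/((j:ℝ)+1)) * (1/harm n) := by
    intro j _
    rw [one_div_mul_one_div]
  rw [h1, Finset.sum_congr rfl h2, ← Finset.sum_mul]
  rw [show ∑ j ∈ Finset.range n, 1/((j:ℝ)+1) = harm n from rfl]
  field_simp

lemma harm_sub {m n : ℕ} (hmn : m ≤ n) :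
    ∑ s ∈ Finset.range (n - m), 1 / (((s:ℝ) + 1 + (m:ℝ))) = harm n - harm m := by
  have h1 := Finset.sum_Ico_eq_sub (fun j => 1/((j:ℝ)+1)) hmn
  have h2 := Finset.sum_Ico_eq_sum_range (fun j => 1/((j:ℝ)+1)) m n
  rw [h2] at h1
  rw [harm, harm, ← h1]
  apply Finset.sum_congr rfl
  intro s _
  push_cast
  ring_nf

lemma embezNu_nonneg {n m : ℕ} (hn : 1 ≤ n) (t : Fin (n * m)) : 0 ≤ embezNu n m t := by
  rw [embezNu]
  have hH := harm_pos hn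
  split
  · rw [embez]; positivity
  · exact le_refl 0

lemma sum_embezNu {n m : ℕ} (hm : 1 ≤ m) (hn : 1 ≤ n) :
    ∑ t : Fin (n * m), embezNu n m t = 1 := by
  have hnm : n ≤ n * m := Nat.le_mul_of_pos_right n (by omega)
  have h1 : ∑ t : Fin (n * m), embezNu n m t
      = ∑ t ∈ Finset.univ.filter (fun t : Fin (n*m) => (t:ℕ) < n), embezNu n m t := by
    rw [eq_comm]
    apply Finset.sum_subset (Finset.filter_subset _ _)
    intro t _ ht
    rw [Finset.mem_filter] at ht
    rw [embezNu, dif_neg (by tauto)]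
  have h2 : ∑ t ∈ Finset.univ.filter (fun t : Fin (n*m) => (t:ℕ) < n), embezNu n m t
      = ∑ a : Fin n, embez n a := by
    apply Finset.sum_nbij' (i := fun t : Fin (n*m) => (⟨(t:ℕ) % n, Nat.mod_lt _ (by omega)⟩ : Fin n))
      (j := fun a : Fin n => (⟨(a:ℕ), lt_of_lt_of_le a.isLt hnm⟩ : Fin (n*m)))
    · intro t _; exact Finset.mem_univ _
    · intro a _
      exact Finset.mem_filter.mpr ⟨Finset.mem_univ _, a.isLt⟩
    · intro t ht
      have h := (Finset.mem_filter.mp ht).2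
      ext
      simp [Nat.mod_eq_of_lt h]
    · intro a _
      ext
      simp [Nat.mod_eq_of_lt a.isLt]
    · intro t ht
      have h := (Finset.mem_filter.mp ht).2
      rw [embezNu, dif_pos h]
      congr 1
      ext
      simp [Nat.mod_eq_of_lt h]
  rw [h1, h2, sum_embez hn]

lemma embez_main {m n : ℕ} (hm : 1 ≤ m) (hn : 1 ≤ n) (p : Fin m → ℝ) (hp : IsProb p) :
    (1 - harm m / harm n ≤ ∑ t : Fin (n * m), Real.sqrt (embezW n m p t * embezNu n m t)) ∧
    tvDist (embezW n m p) (embezNu n m) ≤ harm m / harm n := by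
  have hH : 0 < harm n := harm_pos hn
  have hnm : n ≤ n * m := Nat.le_mul_of_pos_right n (by omega)
  set x : Fin (n * m) → ℝ := fun u : Fin (n * m) =>
      embez n (finProdFinEquiv.symm u).1 * p (finProdFinEquiv.symm u).2 with hxdef
  have hwdef : embezW n m p = descSort x := rfl
  have hx0 : ∀ u, 0 ≤ x u := by
    intro u
    apply mul_nonneg _ (hp.1 _)
    rw [embez]; positivity
  have hw0 : ∀ t, 0 ≤ embezW n m p t := by
    intro t; rw [hwdef]; exact descSort_nonneg hx0 t
  have hν0 : ∀ t, 0 ≤ embezNu n m t := embezNu_nonneg hn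
  set F : Finset (Fin (n * m)) := Finset.univ.filter (fun t : Fin (n*m) => (t:ℕ) + m < n)
    with hF
  set g : Fin (n * m) → ℝ := fun t => 1 / (((t:ℕ):ℝ) + 1 + (m:ℝ)) * (1 / harm n) with hg
  have hg0 : ∀ t, 0 ≤ g t := by
    intro t; rw [hg]; positivity
  have hkey : ∀ t ∈ F, g t ≤ embezW n m p t
      ∧ embezNu n m t = 1 / (((t:ℕ):ℝ) + 1) * (1 / harm n) := by
    intro t ht
    have hts : ((t:ℕ) + m < n) := (Finset.mem_filter.mp ht).2
    have htn : (t:ℕ) < n := by omega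
    constructor
    · set c : ℝ := 1 / ((((t:ℕ):ℝ) + 1 + (m:ℝ)) * harm n) with hc
      have hcc : g t = c := by
        rw [hg, hc]; exact one_div_mul_one_div _ _
      rw [hcc, hwdef]
      have hcardx : (Finset.univ.filter fun u : Fin (n*m) => c ≤ x u).card
          = (Finset.univ.filter fun q : Fin n × Fin m => c ≤ embez n q.1 * p q.2).card := by
        apply Finset.card_bij (fun u _ => finProdFinEquiv.symm u)
        · intro u hu
          refine Finset.mem_filter.mpr ⟨Finset.mem_univ _, ?_⟩
          exact (Finset.mem_filter.mp hu).2
        · intro a _ b _ h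
          exact finProdFinEquiv.symm.injective h
        · intro q hq
          refine ⟨finProdFinEquiv q, Finset.mem_filter.mpr ⟨Finset.mem_univ _, ?_⟩, by simp⟩
          rw [hxdef]
          simpa using (Finset.mem_filter.mp hq).2
      have hcount := count_ge hm hn hp (s := (t:ℕ)) (by omega)
      have hcard : (t:ℕ) + 1 ≤ (Finset.univ.filter fun u : Fin (n*m) => c ≤ x u).card := by
        rw [hcardx]; exact hcount
      have := descSort_ge x c t.isLt hcard
      simpa using this
    · rw [embezNu, dif_pos htn, embez, one_div_mul_one_div]
  have hgν : ∀ t ∈ F, g t ≤ embezNu n m t := by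
    intro t ht
    rw [(hkey t ht).2, hg]
    apply mul_le_mul_of_nonneg_right _ (by positivity)
    apply one_div_le_one_div_of_le (by positivity)
    have : (0:ℝ) ≤ (m:ℝ) := by positivity
    linarith
  have hsumF : 1 - harm m / harm n ≤ ∑ t ∈ F, g t := by
    rcases le_or_gt m n with hmn | hmn
    · have hbij : ∑ t ∈ F, g t = ∑ s ∈ Finset.range (n - m), 1 / (((s:ℝ) + 1 + (m:ℝ))) * (1 / harm n) := by
        apply Finset.sum_nbij' (i := fun t : Fin (n*m) => (t:ℕ))
          (j := fun s : ℕ => if h : s < n * m then (⟨s, h⟩ : Fin (n*m)) else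
            (⟨0, by omega⟩ : Fin (n*m)))
        · intro t ht
          have := (Finset.mem_filter.mp ht).2
          exact Finset.mem_range.mpr (by omega)
        · intro s hs
          have hs' : s < n - m := Finset.mem_range.mp hs
          have hsnm : s < n * m := by
            have : s < n := by omega
            omega
          rw [dif_pos hsnm]
          exact Finset.mem_filter.mpr ⟨Finset.mem_univ _, by simp; omega⟩
        · intro t ht
          rw [dif_pos t.isLt]
        · intro s hs
          have hs' : s < n - m := Finset.mem_range.mp hs
          have hsnm : s < n * m := by
            have : s < n := by omega
            omega
          rw [dif_pos hsnm]
        · intro t _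
          rw [hg]
      rw [hbij, ← Finset.sum_mul, harm_sub hmn]
      have : (harm n - harm m) * (1 / harm n) = 1 - harm m / harm n := by
        field_simp
      rw [this]
    · have hFe : F = ∅ := by
        rw [hF, Finset.filter_eq_empty_iff]
        intro t _
        omega
      rw [hFe, Finset.sum_empty]
      have : harm n ≤ harm m := harm_mono (le_of_lt hmn)
      have h1 : 1 ≤ harm m / harm n := by
        rw [le_div_iff₀ hH]; linarith
      linarith
  constructor
  · calc 1 - harm m / harm n ≤ ∑ t ∈ F, g t := hsumF
      _ ≤ ∑ t ∈ F, Real.sqrt (embezW n m p t * embezNu n m t) := by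
          apply Finset.sum_le_sum
          intro t ht
          rw [Real.le_sqrt (hg0 t) (mul_nonneg (hw0 t) (hν0 t))]
          have h1 := (hkey t ht).1
          have h2 := hgν t ht
          have := mul_le_mul h1 h2 (hg0 t) (hw0 t)
          nlinarith [hg0 t]
      _ ≤ ∑ t : Fin (n * m), Real.sqrt (embezW n m p t * embezNu n m t) := by
          apply Finset.sum_le_sum_of_subset_of_nonneg (Finset.subset_univ F)
          intro t _ _
          exact Real.sqrt_nonneg _
  · have hsw : ∑ t, embezW n m p t = 1 := by
      rw [hwdef, sum_descSort]
      have := Equiv.sum_comp (finProdFinEquiv (m := n) (n := m)).symm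
        (fun q : Fin n × Fin m => embez n q.1 * p q.2)
      rw [hxdef]
      rw [this, Fintype.sum_prod_type]
      have : ∀ a : Fin n, ∑ b : Fin m, embez n a * p b = embez n a := by
        intro a
        rw [← Finset.mul_sum, hp.2, mul_one]
      simp only [this]
      exact sum_embez hn
    have hsν : ∑ t, embezNu n m t = 1 := sum_embezNu hm hn
    have hmin : 1 - harm m / harm n ≤ ∑ t : Fin (n*m), min (embezW n m p t) (embezNu n m t) := by
      calc 1 - harm m / harm n ≤ ∑ t ∈ F, g t := hsumF
        _ ≤ ∑ t ∈ F, min (embezW n m p t) (embezNu n m t) := by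
            apply Finset.sum_le_sum
            intro t ht
            exact le_min (hkey t ht).1 (hgν t ht)
        _ ≤ ∑ t : Fin (n * m), min (embezW n m p t) (embezNu n m t) := by
            apply Finset.sum_le_sum_of_subset_of_nonneg (Finset.subset_univ F)
            intro t _ _
            exact le_min (hw0 t) (hν0 t)
    have habs : ∀ t : Fin (n*m), |embezW n m p t - embezNu n m t|
        = embezW n m p t + embezNu n m t - 2 * min (embezW n m p t) (embezNu n m t) := by
      intro t
      rcases le_total (embezW n m p t) (embezNu n m t) with h | h
      · rw [abs_of_nonpos (by linarith), min_eq_left h]; ring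
      · rw [abs_of_nonneg (by linarith), min_eq_right h]; ring
    rw [tvDist]
    rw [Finset.sum_congr rfl (fun t _ => habs t)]
    rw [Finset.sum_sub_distrib, Finset.sum_add_distrib, hsw, hsν, ← Finset.mul_sum]
    linarith

/-- embezzlement. For every `m ≥ 1` and `ε > 0` there is `n₀` such
that for all `n ≥ n₀` and every distribution `p` on `Fin m`, the fidelity between
the decreasing rearrangement of `μ_n ⊗ p` and that of `μ_n ⊗ e₀` is at least
`1 - ε`; in particular the total variation distance between them tends to `0` as
`n → ∞`, uniformly over `p`. -/
theorem embezzling_fidelity {m : ℕ} (hm : 1 ≤ m) :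
    (∀ ε : ℝ, 0 < ε → ∃ n₀ : ℕ, 1 ≤ n₀ ∧ ∀ n : ℕ, n₀ ≤ n →
      ∀ p : Fin m → ℝ, IsProb p →
        1 - ε ≤ ∑ t : Fin (n * m), Real.sqrt (embezW n m p t * embezNu n m t)) ∧
    (∀ ε : ℝ, 0 < ε → ∃ n₀ : ℕ, 1 ≤ n₀ ∧ ∀ n : ℕ, n₀ ≤ n →
      ∀ p : Fin m → ℝ, IsProb p →
        tvDist (embezW n m p) (embezNu n m) ≤ ε) := by
  have key : ∀ ε : ℝ, 0 < ε → ∃ n₀ : ℕ, 1 ≤ n₀ ∧ ∀ n : ℕ, n₀ ≤ n → 1 ≤ n ∧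
      harm m / harm n ≤ ε := by
    intro ε hε
    have := Filter.tendsto_atTop.mp Real.tendsto_sum_range_one_div_nat_succ_atTop (harm m / ε)
    rw [Filter.eventually_atTop] at this
    obtain ⟨N, hN⟩ := this
    refine ⟨max N 1, le_max_right N 1, ?_⟩
    intro n hn
    have hn1 : 1 ≤ n := le_trans (le_max_right N 1) hn
    have hnN : N ≤ n := le_trans (le_max_left N 1) hn
    have hH : 0 < harm n := harm_pos hn1
    refine ⟨hn1, ?_⟩
    have hhn : harm m / ε ≤ harm n := hN n hnN
    rw [div_le_iff₀ hH]
    calc harm m = (harm m / ε) * ε := by field_simp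
      _ ≤ harm n * ε := by nlinarith
      _ = ε * harm n := by ring
  constructor
  · intro ε hε
    obtain ⟨n₀, hn₀, h⟩ := key ε hε
    refine ⟨n₀, hn₀, ?_⟩
    intro n hn p hp
    obtain ⟨hn1, hεn⟩ := h n hn
    have := (embez_main hm hn1 p hp).1
    linarith
  · intro ε hε
    obtain ⟨n₀, hn₀, h⟩ := key ε hε
    refine ⟨n₀, hn₀, ?_⟩
    intro n hn p hp
    obtain ⟨hn1, hεn⟩ := h n hn
    have := (embez_main hm hn1 p hp).2
    linarith

end
end
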